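/- arXiv:2505.10606 — 5 statements merged into one kernel-verified Lean document; each statement's English description precedes it below -/
import Mathlib

section
/- Let Σ be a finite alphabet and let T be a compact decoder-only Transformer over Σ. Then for every ε > 0 there exists δ > 0 such that for every n ∈ ℕ and every pair of sequences α, β ∈ Σ^n with the same last token (α_n = β_n), if d_H(α, β) ≤ δ then ‖T(α) − T(β)‖_∞ ≤ ε, where the output distributions are regarded as vectors in ℝ^Σ. -/
open Finset Filter

open Classical in
/-- Relative Hamming distance between two finite sequences. -/
noncomputable def relHamming {A : Type*} {n : ℕ} (α β : Fin n → A) : ℝ :=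
  ((Finset.univ.filter (fun i => α i ≠ β i)).card : ℝ) / n

/-- Relative Hamming distance between two infinite sequences (1-indexed:
position `n ≥ 1` of the sequence `α : ℕ → A` is `α n`). -/
noncomputable def relHammingInf {A : Type*} (α β : ℕ → A) : ℝ :=
  Filter.liminf
    (fun n : ℕ => relHamming (fun i : Fin n => α (i.val + 1)) (fun i : Fin n => β (i.val + 1)))
    Filter.atTop

/-- A `d`-dimensional decoder-only attention layer. -/
structure AttentionLayer (d : ℕ) where
  p : ℕ → ℕ → (Fin d → ℝ)
  val : (Fin d → ℝ) → (Fin d → ℝ)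
  w : (Fin d → ℝ) → (Fin d → ℝ) → (Fin d → ℝ) → ℝ
  F : (Fin d → ℝ) → (Fin d → ℝ) → (Fin d → ℝ)
  w_pos : ∀ x y z, 0 < w x y z
  val_cont : Continuous val
  w_cont : Continuous fun t : (Fin d → ℝ) × (Fin d → ℝ) × (Fin d → ℝ) => w t.1 t.2.1 t.2.2
  F_cont : Continuous fun t : (Fin d → ℝ) × (Fin d → ℝ) => F t.1 t.2

/-- A positional encoding is compact if its range is contained in a compact set. -/
def AttentionLayer.CompactPE {d : ℕ} (L : AttentionLayer d) : Prop :=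
  ∃ K : Set (Fin d → ℝ), IsCompact K ∧ ∀ i j : ℕ, L.p i j ∈ K

/-- The `j`-th attention vector computed by the layer on input `x`. -/
noncomputable def AttentionLayer.attn {d : ℕ} (L : AttentionLayer d) {n : ℕ}
    (x : Fin n → (Fin d → ℝ)) (j : Fin n) : Fin d → ℝ :=
  (∑ i ∈ Finset.Iic j, L.w (x i) (x j) (L.p i.val j.val))⁻¹ •
    ∑ i ∈ Finset.Iic j, L.w (x i) (x j) (L.p i.val j.val) • L.val (x i)

/-- The output sequence of the layer on input `x`. -/
noncomputable def AttentionLayer.apply {d : ℕ} (L : AttentionLayer d) {n : ℕ}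
    (x : Fin n → (Fin d → ℝ)) : Fin n → (Fin d → ℝ) :=
  fun j => L.F (L.attn x j) (x j)

/-- `sim(x, x̂)`: the minimal `δ ≥ 0` such that `‖x_i − x̂_i‖ ≤ δ` for at least `(1−δ)n`
indices `i`. -/
noncomputable def simDist {d n : ℕ} (x y : Fin n → (Fin d → ℝ)) : ℝ :=
  sInf {δ : ℝ | 0 ≤ δ ∧
    (1 - δ) * n ≤ ((Finset.univ.filter (fun i => ‖x i - y i‖ ≤ δ)).card : ℝ)}

/-- Sequential application of a list of attention layers. -/
noncomputable def applyLayers {d : ℕ} (Ls : List (AttentionLayer d)) {n : ℕ}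
    (x : Fin n → (Fin d → ℝ)) : Fin n → (Fin d → ℝ) :=
  Ls.foldl (fun v L => L.apply v) x

/-- A decoder-only Transformer over a finite alphabet `A`. -/
structure Transformer (A : Type*) [Fintype A] (d : ℕ) where
  embed : A → ℕ → (Fin d → ℝ)
  layers : List (AttentionLayer d)
  proj : (Fin d → ℝ) → (A → ℝ)
  proj_cont : Continuous proj
  proj_nonneg : ∀ y a, 0 ≤ proj y a
  proj_sum : ∀ y, ∑ a, proj y a = 1

/-- The output probability distribution (as a vector in `ℝ^A`) of the Transformer on a
nonempty input sequence. -/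
noncomputable def Transformer.eval {A : Type*} [Fintype A] {d : ℕ} (T : Transformer A d)
    {n : ℕ} (α : Fin (n + 1) → A) : A → ℝ :=
  T.proj (applyLayers T.layers (fun j => T.embed (α j) j.val) (Fin.last n))

/-- A Transformer is compact if its input embedding has range in a compact set and all of
its layers have compact positional encoding. -/
def Transformer.IsCompactT {A : Type*} [Fintype A] {d : ℕ} (T : Transformer A d) : Prop :=
  (∃ K : Set (Fin d → ℝ), IsCompact K ∧ ∀ (a : A) (i : ℕ), T.embed a i ∈ K) ∧
  ∀ L ∈ T.layers, L.CompactPE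

/-- `T` eventually learns the infinite sequence `α` (1-indexed: position `n ≥ 1` is `α n`). -/
def EventuallyLearns {A : Type*} [Fintype A] {d : ℕ} (T : Transformer A d) (α : ℕ → A) :
    Prop :=
  ∃ ε : ℝ, 0 < ε ∧ ∃ n₀ : ℕ, ∀ n ≥ n₀, ∀ σ : A, σ ≠ α (n + 2) →
    T.eval (fun i : Fin (n + 1) => α (i.val + 1)) σ + ε ≤
      T.eval (fun i : Fin (n + 1) => α (i.val + 1)) (α (n + 2))

/-!
On inputs from a compact set the attention weights lie in some interval `[c, C]` with `c > 0`,
so the attention vector at position `j` is an average in which each of the `j + 1` entries has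
weight at most `C / ((j + 1) c)`. Corrupting a `θ`-fraction of the prefix arbitrarily and
perturbing the rest by `δ` therefore moves it by `O(θ) + o(1)` as `δ → 0`, uniformly in the length.
Passing through a layer, closeness is lost only at corrupted positions and at positions whose
prefix is heavily corrupted; by a counting argument the latter are few, so this stability
property survives composition of layers. Inputs with the same tokens at a position have the
same embedding there, and the last position is uncorrupted.
-/

theorem norm_centerMass_sub_centerMass_le {ι E : Type*} [NormedAddCommGroup E]
    [NormedSpace ℝ E] {t : Finset ι} {w w' : ι → ℝ} {v v' : ι → E} {M : ℝ}
    (hw : ∀ i ∈ t, 0 ≤ w i) (hW : 0 < ∑ i ∈ t, w i) (hw' : ∀ i ∈ t, 0 ≤ w' i)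
    (hW' : 0 < ∑ i ∈ t, w' i) (hv' : ∀ i ∈ t, ‖v' i‖ ≤ M) :
    ‖t.centerMass w v - t.centerMass w' v'‖ ≤
      (∑ i ∈ t, (w i * ‖v i - v' i‖ + 2 * M * |w i - w' i|)) / ∑ i ∈ t, w i := by
  set W := ∑ i ∈ t, w i
  set a' := t.centerMass w' v'
  have ha' : ‖a'‖ ≤ M := by
    simpa using (convex_closedBall (0 : E) M).centerMass_mem hw' hW' (by simpa using hv')
  have hsum' : ∑ i ∈ t, w' i • v' i = (∑ i ∈ t, w' i) • a' := by
    simp only [a', centerMass, smul_inv_smul₀ hW'.ne']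
  have hdecomp : t.centerMass w v - a' = W⁻¹ •
      ((∑ i ∈ t, (w i • (v i - v' i) + (w i - w' i) • v' i)) +
        (∑ i ∈ t, (w' i - w i)) • a') := by
    have hsplit : ∑ i ∈ t, (w i • (v i - v' i) + (w i - w' i) • v' i) =
        ∑ i ∈ t, w i • v i - ∑ i ∈ t, w' i • v' i := by
      rw [← sum_sub_distrib]
      exact sum_congr rfl fun i _ => by module
    rw [hsplit, hsum', sum_sub_distrib,
      show ∀ S : E, S - (∑ i ∈ t, w' i) • a' + (∑ i ∈ t, w' i - W) • a' = S - W • a' from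
        fun S => by module, smul_sub, inv_smul_smul₀ hW.ne']
    rfl
  have hWW' : |∑ i ∈ t, (w' i - w i)| ≤ ∑ i ∈ t, |w i - w' i| :=
    (abs_sum_le_sum_abs _ _).trans_eq (sum_congr rfl fun i _ => abs_sub_comm _ _)
  rw [hdecomp, norm_smul, norm_inv, Real.norm_of_nonneg hW.le, inv_mul_eq_div]
  gcongr
  calc _ ≤ ∑ i ∈ t, (w i * ‖v i - v' i‖ + |w i - w' i| * M) +
        (∑ i ∈ t, |w i - w' i|) * M := by
        refine (norm_add_le _ _).trans (add_le_add ((norm_sum_le _ _).trans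
          (sum_le_sum fun i hi => (norm_add_le _ _).trans ?_)) ?_)
        · rw [norm_smul, norm_smul, Real.norm_of_nonneg (hw i hi), Real.norm_eq_abs]
          gcongr
          exact hv' i hi
        · rw [norm_smul, Real.norm_eq_abs]
          gcongr
    _ = _ := by
        rw [sum_mul, ← sum_add_distrib]
        exact sum_congr rfl fun i _ => by ring

theorem sum_le_card_inter_mul_add_card_mul {ι : Type*} [DecidableEq ι] {s S : Finset ι}
    {f : ι → ℝ} {B η : ℝ} (hB : ∀ i ∈ s, f i ≤ B) (hη : ∀ i ∈ s, i ∉ S → f i ≤ η)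
    (hη₀ : 0 ≤ η) :
    ∑ i ∈ s, f i ≤ #(s ∩ S) * B + #s * η := by
  rw [← sum_filter_add_sum_filter_not s (· ∈ S), filter_mem_eq_inter]
  gcongr
  · exact (sum_le_card_nsmul _ _ _ fun i hi => hB i (mem_inter.1 hi).1).trans_eq
      (nsmul_eq_mul _ _)
  · calc _ ≤ #{i ∈ s | i ∉ S} * η :=
          (sum_le_card_nsmul _ _ _ fun i hi =>
            hη i (mem_filter.1 hi).1 (mem_filter.1 hi).2).trans_eq (nsmul_eq_mul _ _)
      _ ≤ #s * η := by gcongr; exact filter_subset _ _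

theorem card_filter_val_add_one_le {n : ℕ} {t : ℝ} (ht : 0 ≤ t) :
    (#{i : Fin n | (i : ℝ) + 1 ≤ t} : ℝ) ≤ t := by
  have hsub : ({i : Fin n | (i : ℝ) + 1 ≤ t} : Finset (Fin n)).map Fin.valEmbedding ⊆
      range ⌊t⌋₊ := by
    intro k hk
    obtain ⟨i, hi, rfl⟩ := mem_map.1 hk
    rw [mem_range, Fin.valEmbedding_apply, ← Nat.add_one_le_iff]
    exact Nat.le_floor (by simpa using (mem_filter.1 hi).2)
  calc _ ≤ (⌊t⌋₊ : ℝ) := by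
        exact_mod_cast (card_map _).symm.trans_le ((card_le_card hsub).trans_eq (card_range _))
    _ ≤ t := Nat.floor_le ht

section SparseStability

variable {E F G : Type*} [PseudoMetricSpace E] [PseudoMetricSpace F] [PseudoMetricSpace G]

def SeqMapsTo (Φ : ∀ n, (Fin n → E) → Fin n → F) (K : Set E) (K' : Set F) : Prop :=
  ∀ (n : ℕ) (x : Fin n → E), (∀ i, x i ∈ K) → ∀ j, Φ n x j ∈ K'

/-- Inputs may be corrupted arbitrarily on a set `S` of positions and by at most `δ` elsewhere;
the output at an uncorrupted position `j` is then `ε`-close, provided corrupted positions make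
up at most a `θ`-fraction of the prefix up to `j`. -/
def SparselyStableOn (Φ : ∀ n, (Fin n → E) → Fin n → F) (K : Set E) : Prop :=
  ∀ ε > 0, ∃ δ > 0, ∃ θ > 0, ∀ (n : ℕ) (x y : Fin n → E),
    (∀ i, x i ∈ K) → (∀ i, y i ∈ K) → ∀ S : Finset (Fin n), (∀ i ∉ S, dist (x i) (y i) ≤ δ) →
    ∀ j ∉ S, (#(Iic j ∩ S) : ℝ) ≤ θ * (j + 1) → dist (Φ n x j) (Φ n y j) ≤ ε

theorem sparselyStableOn_id (K : Set E) : SparselyStableOn (fun _ x => x) K :=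
  fun ε hε => ⟨ε, hε, 1, one_pos, fun _ _ _ _ _ _ hS j hj _ => hS j hj⟩

theorem SparselyStableOn.comp {Φ : ∀ n, (Fin n → E) → Fin n → F}
    {Ψ : ∀ n, (Fin n → F) → Fin n → G} {K : Set E} {K' : Set F}
    (hΦ : SparselyStableOn Φ K) (hΦK : SeqMapsTo Φ K K') (hΨ : SparselyStableOn Ψ K') :
    SparselyStableOn (fun n x => Ψ n (Φ n x)) K := by
  intro ε hε
  obtain ⟨δ₂, hδ₂, θ₂, hθ₂, hΨ⟩ := hΨ ε hε
  obtain ⟨δ₁, hδ₁, θ₁, hθ₁, hΦ⟩ := hΦ δ₂ hδ₂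
  refine ⟨δ₁, hδ₁, min θ₁ (θ₂ * θ₁ / (θ₁ + 1)), by positivity, ?_⟩
  intro n x y hx hy S hS j hj hSj
  set m : ℝ := (#(Iic j ∩ S) : ℝ)
  have hm : m ≤ θ₁ * (j + 1) := hSj.trans (by gcongr; exact min_le_left _ _)
  -- After `Φ`, closeness may also fail at positions whose prefix is too heavily corrupted.
  set H : Finset (Fin n) := {i | θ₁ * ((i : ℝ) + 1) < #(Iic i ∩ S)}
  have mem_H : ∀ i, i ∈ H ↔ θ₁ * ((i : ℝ) + 1) < #(Iic i ∩ S) := by simp [H]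
  set S₁ := S ∪ H
  have hj₁ : j ∉ S₁ := by simpa only [S₁, mem_union, mem_H, hj, not_lt, false_or] using hm
  have hclose : ∀ i ∉ S₁, dist (Φ n x i) (Φ n y i) ≤ δ₂ := fun i hi => by
    simp only [S₁, mem_union, mem_H, not_or, not_lt] at hi
    exact hΦ n x y hx hy S hS i hi.1 hi.2
  have hH : Iic j ∩ H ⊆ ({i | (i : ℝ) + 1 ≤ m / θ₁} : Finset (Fin n)) := by
    intro i hi
    simp only [mem_inter, mem_Iic, mem_H, mem_filter, mem_univ, true_and] at hi ⊢
    have : (#(Iic i ∩ S) : ℝ) ≤ m :=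
      Nat.cast_le.2 <| card_le_card (inter_subset_inter_right (Iic_subset_Iic.2 hi.1))
    rw [le_div_iff₀ hθ₁]
    linarith
  have hcount : (#(Iic j ∩ S₁) : ℝ) ≤ θ₂ * (j + 1) := calc
    (#(Iic j ∩ S₁) : ℝ) ≤ m + m / θ₁ := by
      rw [inter_union_distrib_left]
      refine (Nat.cast_le.2 (card_union_le _ _)).trans ?_
      push_cast
      gcongr
      exact (Nat.cast_le.2 (card_le_card hH)).trans (card_filter_val_add_one_le (by positivity))
    _ = m * (θ₁ + 1) / θ₁ := by field_simp
    _ ≤ (θ₂ * θ₁ / (θ₁ + 1) * (j + 1)) * (θ₁ + 1) / θ₁ := by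
      gcongr
      exact hSj.trans (by gcongr; exact min_le_right _ _)
    _ = θ₂ * (j + 1) := by field_simp
  exact hΨ n _ _ (hΦK n x hx) (hΦK n y hy) S₁ hclose j hj₁ hcount

theorem SparselyStableOn.comp_prod_self {Φ : ∀ n, (Fin n → E) → Fin n → F} {K : Set E}
    {K₁ : Set F} (hΦ : SparselyStableOn Φ K) (hΦK : SeqMapsTo Φ K K₁) (hK : IsCompact K)
    (hK₁ : IsCompact K₁) {g : F × E → G} (hg : Continuous g) :
    SparselyStableOn (fun n x j => g (Φ n x j, x j)) K := by
  intro ε hε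
  obtain ⟨η, hη, hgη⟩ := Metric.uniformContinuousOn_iff_le.1
    ((hK₁.prod hK).uniformContinuousOn_of_continuous hg.continuousOn) ε hε
  obtain ⟨δ, hδ, θ, hθ, hΦ⟩ := hΦ η hη
  refine ⟨min δ η, by positivity, θ, hθ, fun n x y hx hy S hS j hj hSj => ?_⟩
  refine hgη _ ⟨hΦK n x hx j, hx j⟩ _ ⟨hΦK n y hy j, hy j⟩ ?_
  rw [Prod.dist_eq]
  refine max_le ?_ ?_
  · exact hΦ n x y hx hy S (fun i hi => (hS i hi).trans (min_le_left _ _)) j hj hSj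
  · exact (hS j hj).trans (min_le_right _ _)

end SparseStability

namespace AttentionLayer

variable {d : ℕ} (L : AttentionLayer d)

theorem attn_eq_centerMass {n : ℕ} (x : Fin n → Fin d → ℝ) (j : Fin n) :
    L.attn x j = (Iic j).centerMass (fun i => L.w (x i) (x j) (L.p i j)) (fun i => L.val (x i)) :=
  rfl

theorem seqMapsTo_attn {K : Set (Fin d → ℝ)} {M : ℝ} (hM : ∀ u ∈ K, ‖L.val u‖ ≤ M) :
    SeqMapsTo (fun _ => L.attn) K (Metric.closedBall 0 M) := fun _ x hx j =>
  (convex_closedBall 0 M).centerMass_mem (fun _ _ => (L.w_pos _ _ _).le)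
    (sum_pos (fun _ _ => L.w_pos _ _ _) nonempty_Iic) (fun i _ => by simpa using hM _ (hx i))

theorem exists_weight_bounds (hL : L.CompactPE) {K : Set (Fin d → ℝ)} (hK : IsCompact K) :
    ∃ c > 0, ∃ C > 0, ∀ u ∈ K, ∀ u' ∈ K, ∀ i j,
      c ≤ L.w u u' (L.p i j) ∧ L.w u u' (L.p i j) ≤ C := by
  obtain ⟨P, hP, hpP⟩ := hL
  have hQ : IsCompact (K ×ˢ K ×ˢ P) := hK.prod (hK.prod hP)
  obtain ⟨c, hc, hcw⟩ := hQ.exists_forall_le' L.w_cont.continuousOn fun t _ => L.w_pos _ _ _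
  obtain ⟨C, hC, hwC⟩ :=
    (hQ.image_of_continuousOn L.w_cont.continuousOn).isBounded.exists_pos_norm_le
  refine ⟨c, hc, C, hC, fun u hu u' hu' i j => ⟨hcw (u, u', _) ⟨hu, hu', hpP i j⟩, ?_⟩⟩
  exact (le_abs_self _).trans (hwC _ ⟨(u, u', _), ⟨hu, hu', hpP i j⟩, rfl⟩)

theorem sparselyStableOn_attn (hL : L.CompactPE) {K : Set (Fin d → ℝ)} (hK : IsCompact K) :
    SparselyStableOn (fun _ => L.attn) K := by
  obtain ⟨c, hc, C, hC, hcC⟩ := L.exists_weight_bounds hL hK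
  obtain ⟨M, hM, hvM⟩ :=
    (hK.image_of_continuousOn L.val_cont.continuousOn).isBounded.exists_pos_norm_le
  intro ε hε
  obtain ⟨δv, hδv, hv⟩ := Metric.uniformContinuousOn_iff_le.1
    (hK.uniformContinuousOn_of_continuous L.val_cont.continuousOn) (c * ε / (4 * C))
    (by positivity)
  obtain ⟨P, hP, hpP⟩ := hL
  obtain ⟨δw, hδw, hw⟩ := Metric.uniformContinuousOn_iff_le.1
    ((hK.prod (hK.prod hP)).uniformContinuousOn_of_continuous L.w_cont.continuousOn)
    (c * ε / (8 * M)) (by positivity)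
  refine ⟨min δv δw, by positivity, c * ε / (8 * M * C), by positivity, ?_⟩
  intro n x y hx hy S hS j hj hSj
  set w : Fin n → ℝ := fun i => L.w (x i) (x j) (L.p i j)
  set w' : Fin n → ℝ := fun i => L.w (y i) (y j) (L.p i j)
  set f : Fin n → ℝ := fun i =>
    w i * ‖L.val (x i) - L.val (y i)‖ + 2 * M * |w i - w' i|
  have hvM' : ∀ i, ‖L.val (x i)‖ ≤ M ∧ ‖L.val (y i)‖ ≤ M := fun i =>
    ⟨hvM _ (Set.mem_image_of_mem _ (hx i)), hvM _ (Set.mem_image_of_mem _ (hy i))⟩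
  have hwcC : ∀ i, (c ≤ w i ∧ w i ≤ C) ∧ (c ≤ w' i ∧ w' i ≤ C) := fun i =>
    ⟨hcC _ (hx i) _ (hx j) i j, hcC _ (hy i) _ (hy j) i j⟩
  have hf : ∀ i, f i ≤ 4 * M * C := fun i => by
    obtain ⟨⟨hcw, hwC⟩, ⟨hcw', hw'C⟩⟩ := hwcC i
    have hΔv : ‖L.val (x i) - L.val (y i)‖ ≤ M + M :=
      (norm_sub_le _ _).trans (add_le_add (hvM' i).1 (hvM' i).2)
    have hΔw : |w i - w' i| ≤ C := abs_sub_le_iff.2 ⟨by linarith, by linarith⟩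
    calc f i ≤ C * (M + M) + 2 * M * C := by dsimp only [f]; gcongr
      _ = 4 * M * C := by ring
  have hf_clean : ∀ i ∉ S, f i ≤ c * ε / 2 := fun i hi => by
    have hΔv : ‖L.val (x i) - L.val (y i)‖ ≤ c * ε / (4 * C) := by
      rw [← dist_eq_norm]
      exact hv _ (hx i) _ (hy i) ((hS i hi).trans (min_le_left _ _))
    have hΔw : |w i - w' i| ≤ c * ε / (8 * M) := by
      refine hw (x i, x j, L.p i j) ⟨hx i, hx j, hpP i j⟩ (y i, y j, L.p i j)
        ⟨hy i, hy j, hpP i j⟩ ?_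
      simp only [Prod.dist_eq, dist_self]
      exact max_le ((hS i hi).trans (min_le_right _ _))
        (max_le ((hS j hj).trans (min_le_right _ _)) hδw.le)
    calc f i ≤ C * (c * ε / (4 * C)) + 2 * M * (c * ε / (8 * M)) := by
          dsimp only [f]
          gcongr
          · exact (hwcC i).1.2
      _ = c * ε / 2 := by field_simp; ring
  have hW : (j + 1 : ℝ) * c ≤ ∑ i ∈ Iic j, w i := by
    simpa [Fin.card_Iic] using card_nsmul_le_sum (Iic j) w c fun i _ => (hwcC i).1.1
  change ‖L.attn x j - L.attn y j‖ ≤ ε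
  rw [attn_eq_centerMass, attn_eq_centerMass]
  refine (norm_centerMass_sub_centerMass_le (fun _ _ => (L.w_pos _ _ _).le)
    (hW.trans_lt' (by positivity)) (fun _ _ => (L.w_pos _ _ _).le)
    (sum_pos (fun _ _ => L.w_pos _ _ _) nonempty_Iic)
    (fun i _ => by simpa using hvM _ (Set.mem_image_of_mem _ (hy i)))).trans ?_
  rw [div_le_iff₀ (hW.trans_lt' (by positivity))]
  calc ∑ i ∈ Iic j, f i ≤ #(Iic j ∩ S) * (4 * M * C) + #(Iic j) * (c * ε / 2) :=
        sum_le_card_inter_mul_add_card_mul (fun i _ => hf i) (fun i _ => hf_clean i)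
          (by positivity)
    _ ≤ c * ε / (8 * M * C) * (j + 1) * (4 * M * C) + (j + 1) * (c * ε / 2) := by
        rw [Fin.card_Iic]; push_cast; gcongr
    _ = ε * ((j + 1) * c) := by field_simp; ring
    _ ≤ ε * ∑ i ∈ Iic j, w i := by gcongr

theorem sparselyStableOn_apply (hL : L.CompactPE) {K : Set (Fin d → ℝ)} (hK : IsCompact K) :
    SparselyStableOn (fun _ => L.apply) K := by
  obtain ⟨M, hM⟩ := hK.exists_bound_of_continuousOn L.val_cont.continuousOn
  exact (L.sparselyStableOn_attn hL hK).comp_prod_self (L.seqMapsTo_attn hM) hK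
    (isCompact_closedBall 0 M) L.F_cont

theorem exists_seqMapsTo_apply {K : Set (Fin d → ℝ)} (hK : IsCompact K) :
    ∃ K', IsCompact K' ∧ SeqMapsTo (fun _ => L.apply) K K' := by
  obtain ⟨M, hM⟩ := hK.exists_bound_of_continuousOn L.val_cont.continuousOn
  exact ⟨(fun t => L.F t.1 t.2) '' (Metric.closedBall 0 M ×ˢ K),
    ((isCompact_closedBall 0 M).prod hK).image L.F_cont,
    fun n x hx j => ⟨(L.attn x j, x j), ⟨L.seqMapsTo_attn hM n x hx j, hx j⟩, rfl⟩⟩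

end AttentionLayer

theorem exists_seqMapsTo_applyLayers {d : ℕ} (Ls : List (AttentionLayer d))
    {K : Set (Fin d → ℝ)} (hK : IsCompact K) :
    ∃ K', IsCompact K' ∧ SeqMapsTo (fun _ => applyLayers Ls) K K' := by
  induction Ls generalizing K with
  | nil => exact ⟨K, hK, fun _ _ hx => hx⟩
  | cons L Ls ih =>
    obtain ⟨K₁, hK₁, h₁⟩ := L.exists_seqMapsTo_apply hK
    obtain ⟨K', hK', h'⟩ := ih hK₁
    exact ⟨K', hK', fun n x hx => h' n _ (h₁ n x hx)⟩

theorem sparselyStableOn_applyLayers {d : ℕ} {Ls : List (AttentionLayer d)}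
    (hLs : ∀ L ∈ Ls, L.CompactPE) {K : Set (Fin d → ℝ)} (hK : IsCompact K) :
    SparselyStableOn (fun _ => applyLayers Ls) K := by
  induction Ls generalizing K with
  | nil => exact sparselyStableOn_id K
  | cons L Ls ih =>
    obtain ⟨K₁, hK₁, h₁⟩ := L.exists_seqMapsTo_apply hK
    exact (L.sparselyStableOn_apply (hLs L List.mem_cons_self) hK).comp h₁
      (ih (fun L' hL' => hLs L' (List.mem_cons_of_mem _ hL')) hK₁)

open Classical in
theorem card_filter_ne_le_of_relHamming_le {A : Type*} {n : ℕ} {α β : Fin (n + 1) → A}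
    {θ : ℝ} (h : relHamming α β ≤ θ) : (#{i | α i ≠ β i} : ℝ) ≤ θ * (n + 1) := by
  rwa [relHamming, Nat.cast_add_one, div_le_iff₀ (by positivity)] at h

/-- **Continuity (Theorem 1).** For a compact decoder-only Transformer `T` and every
`ε > 0` there is `δ > 0` such that for all `n` and all sequences `α β` of the same length
with the same last token, `d_H(α, β) ≤ δ` implies `‖T(α) − T(β)‖_∞ ≤ ε`. -/
theorem transformer_continuity {A : Type*} [Fintype A] {d : ℕ} (T : Transformer A d)
    (hT : T.IsCompactT) :
    ∀ ε : ℝ, 0 < ε → ∃ δ : ℝ, 0 < δ ∧ ∀ (n : ℕ) (α β : Fin (n + 1) → A),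
      α (Fin.last n) = β (Fin.last n) → relHamming α β ≤ δ →
      ‖T.eval α - T.eval β‖ ≤ ε := by
  classical
  obtain ⟨⟨K, hK, hembed⟩, hlayers⟩ := hT
  obtain ⟨K', hK', hmaps⟩ := exists_seqMapsTo_applyLayers T.layers hK
  intro ε hε
  obtain ⟨η, hη, hproj⟩ := Metric.uniformContinuousOn_iff_le.1
    (hK'.uniformContinuousOn_of_continuous T.proj_cont.continuousOn) ε hε
  obtain ⟨δ, hδ, θ, hθ, hstable⟩ := sparselyStableOn_applyLayers hlayers hK η hη
  refine ⟨θ, hθ, fun n α β hlast hαβ => ?_⟩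
  set S : Finset (Fin (n + 1)) := {i | α i ≠ β i}
  have hclean : ∀ i ∉ S, dist (T.embed (α i) i) (T.embed (β i) i) ≤ δ := fun i hi => by
    simp_all [S, hδ.le]
  have hlastS : Fin.last n ∉ S := by simpa [S] using hlast
  have hcount : (#(Iic (Fin.last n) ∩ S) : ℝ) ≤ θ * ((Fin.last n : ℕ) + 1) := by
    rw [← Fin.top_eq_last, Iic_top, univ_inter, Fin.top_eq_last, Fin.val_last]
    convert card_filter_ne_le_of_relHamming_le hαβ
  rw [← dist_eq_norm]
  exact hproj _ (hmaps _ _ (fun _ => hembed _ _) _) _ (hmaps _ _ (fun _ => hembed _ _) _)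
    (hstable _ _ _ (fun _ => hembed _ _) (fun _ => hembed _ _) S hclean _ hlastS hcount)
end

section
/- Let L be a d-dimensional decoder-only attention layer with compact positional encoding and let K ⊆ ℝ^d be compact. Then for every ε > 0 there exists δ > 0 such that for every n ∈ ℕ and all sequences x, x̂ ∈ K^n: if sim(x, x̂) ≤ δ and ‖x_n − x̂_n‖_∞ ≤ δ, then sim(y, ŷ) ≤ ε and ‖y_n − ŷ_n‖_∞ ≤ ε, where (y_1,…,y_n) = L(x) and (ŷ_1,…,ŷ_n) = L(x̂). -/
open Finset Filter

/-!
Everything the layer evaluates (the inputs and the positional encodings) lies in one compact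
set, on which `w` is bounded between two positive constants, `val` is bounded, and `w`, `val`
and `F` are uniformly continuous. An attention vector is a centre of mass: moving all weights
and points a little moves it a little, and changing a fraction `η` of them arbitrarily moves it
by `O(η)`. Hence output `j` is close as soon as `x_j` is close and the positions where the inputs
differ make up a small fraction of the prefix `1..j`. When `sim(x, x̂) ≤ δ` there are at most
`2δn` such positions, a small fraction of every prefix longer than `2δn/η`, so all but
`2δn(1 + 1/η)` outputs are close, and so is the last one.
-/

section CenterMass

variable {ι E : Type*} [NormedAddCommGroup E] [NormedSpace ℝ E]

theorem Finset.sum_le_card_mul_add_card_filter_mul {s : Finset ι} {f : ι → ℝ} (p : ι → Prop)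
    [DecidablePred p] {a b : ℝ} (ha : 0 ≤ a) (hgood : ∀ i ∈ s, ¬p i → f i ≤ a)
    (hbad : ∀ i ∈ s, p i → f i ≤ b) :
    ∑ i ∈ s, f i ≤ #s * a + #(s.filter p) * b := by
  rw [← sum_filter_add_sum_filter_not s p, add_comm]
  have hgood' :=
    sum_le_card_nsmul (s.filter (¬p ·)) f a fun i hi => (mem_filter.1 hi).elim (hgood i)
  have hbad' := sum_le_card_nsmul (s.filter p) f b fun i hi => (mem_filter.1 hi).elim (hbad i)
  have hcard : (#(s.filter (¬p ·)) : ℝ) ≤ #s := by exact_mod_cast card_filter_le s _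
  rw [nsmul_eq_mul] at hgood' hbad'
  nlinarith

theorem Finset.norm_centerMass_le {s : Finset ι} {w : ι → ℝ} {z : ι → E} {V : ℝ}
    (hw : ∀ i ∈ s, 0 ≤ w i) (hws : 0 < ∑ i ∈ s, w i) (hz : ∀ i ∈ s, ‖z i‖ ≤ V) :
    ‖s.centerMass w z‖ ≤ V :=
  mem_closedBall_zero_iff.1 <|
    (convex_closedBall 0 V).centerMass_mem hw hws fun i hi => mem_closedBall_zero_iff.2 (hz i hi)

theorem Finset.norm_centerMass_sub_centerMass_le {s : Finset ι} {w w' : ι → ℝ} {z z' : ι → E}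
    (hw : 0 < ∑ i ∈ s, w i) (hw' : ∑ i ∈ s, w' i ≠ 0) :
    ‖s.centerMass w z - s.centerMass w' z'‖ ≤ (∑ i ∈ s, w i)⁻¹ *
      ∑ i ∈ s, (|w i - w' i| * ‖z i - s.centerMass w' z'‖ + |w' i| * ‖z i - z' i‖) := by
  set c' := s.centerMass w' z'
  -- `c'` is the `w'`-barycentre of the `z'`, so the `w'`-weighted deviations from it cancel
  have hcancel : ∑ i ∈ s, w' i • (z' i - c') = 0 := by
    simp only [smul_sub, sum_sub_distrib, ← sum_smul, c', centerMass, smul_inv_smul₀ hw', sub_self]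
  have hdiff : s.centerMass w z - c' =
      (∑ i ∈ s, w i)⁻¹ • ∑ i ∈ s, ((w i - w' i) • (z i - c') + w' i • (z i - z' i)) := by
    have : ∀ i ∈ s, (w i - w' i) • (z i - c') + w' i • (z i - z' i) =
        w i • (z i - c') - w' i • (z' i - c') := fun i _ => by
      simp only [sub_smul, smul_sub]; abel
    rw [sum_congr rfl this, sum_sub_distrib, hcancel, sub_zero]
    simp only [smul_sub, sum_sub_distrib, ← sum_smul, centerMass, smul_sub,
      inv_smul_smul₀ hw.ne']
  rw [hdiff, norm_smul, Real.norm_of_nonneg (inv_nonneg.2 hw.le)]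
  gcongr
  refine (norm_sum_le _ _).trans (sum_le_sum fun i _ => (norm_add_le _ _).trans ?_)
  simp only [norm_smul, Real.norm_eq_abs, le_refl]

theorem Finset.norm_centerMass_sub_centerMass_le_of_card_filter_le {s : Finset ι}
    (hs : s.Nonempty) {w w' : ι → ℝ} {z z' : ι → E} {m M V ω η : ℝ} (p : ι → Prop)
    [DecidablePred p] (hm : 0 < m) (hω : 0 ≤ ω)
    (hw : ∀ i ∈ s, m ≤ w i ∧ w i ≤ M) (hw' : ∀ i ∈ s, m ≤ w' i ∧ w' i ≤ M)
    (hz : ∀ i ∈ s, ‖z i‖ ≤ V) (hz' : ∀ i ∈ s, ‖z' i‖ ≤ V)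
    (hgood : ∀ i ∈ s, ¬p i → |w i - w' i| ≤ ω ∧ ‖z i - z' i‖ ≤ ω)
    (hbad : (#(s.filter p) : ℝ) ≤ η * #s) :
    ‖s.centerMass w z - s.centerMass w' z'‖ ≤ ((2 * V + M) * ω + 4 * M * V * η) / m := by
  have hsum_ge : ∀ {u : ι → ℝ}, (∀ i ∈ s, m ≤ u i ∧ u i ≤ M) → #s * m ≤ ∑ i ∈ s, u i :=
    fun hu => by simpa using card_nsmul_le_sum s _ m fun i hi => (hu i hi).1
  have hs0 : (0 : ℝ) < #s := Nat.cast_pos.2 hs.card_pos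
  have hpos : (0 : ℝ) < #s * m := by positivity
  have hwpos : 0 < ∑ i ∈ s, w i := hpos.trans_le (hsum_ge hw)
  have hw'pos : 0 < ∑ i ∈ s, w' i := hpos.trans_le (hsum_ge hw')
  have hc' : ‖s.centerMass w' z'‖ ≤ V :=
    norm_centerMass_le (fun i hi => hm.le.trans (hw' i hi).1) hw'pos hz'
  have hV : 0 ≤ V := (norm_nonneg _).trans hc'
  obtain ⟨i₀, hi₀⟩ := hs
  have hM : 0 ≤ M := hm.le.trans ((hw i₀ hi₀).1.trans (hw i₀ hi₀).2)
  have hη : 0 ≤ η := nonneg_of_mul_nonneg_left ((Nat.cast_nonneg _).trans hbad) hs0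
  have hterm_le : ∀ i ∈ s, |w i - w' i| ≤ M ∧ |w' i| ≤ M ∧ ‖z i - s.centerMass w' z'‖ ≤ 2 * V ∧
      ‖z i - z' i‖ ≤ 2 * V := fun i hi => by
    obtain ⟨hwm, hwM⟩ := hw i hi
    obtain ⟨hw'm, hw'M⟩ := hw' i hi
    refine ⟨abs_sub_le_iff.2 ⟨by linarith, by linarith⟩, abs_le.2 ⟨by linarith, hw'M⟩, ?_, ?_⟩ <;>
      linarith [norm_sub_le (z i) (s.centerMass w' z'), norm_sub_le (z i) (z' i), hz i hi,
        hz' i hi]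
  have hsum : ∑ i ∈ s, (|w i - w' i| * ‖z i - s.centerMass w' z'‖ + |w' i| * ‖z i - z' i‖) ≤
      #s * ((2 * V + M) * ω + 4 * M * V * η) := by
    refine (sum_le_card_mul_add_card_filter_mul p (a := (2 * V + M) * ω) (b := 4 * M * V)
      (by positivity) ?_ ?_).trans ?_
    · intro i hi hpi
      obtain ⟨-, hw'M, hzc, -⟩ := hterm_le i hi
      obtain ⟨hwω, hzω⟩ := hgood i hi hpi
      have := mul_le_mul hwω hzc (norm_nonneg _) hω
      have := mul_le_mul hw'M hzω (norm_nonneg _) hM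
      linarith
    · intro i hi _
      obtain ⟨hwM, hw'M, hzc, hzz⟩ := hterm_le i hi
      have := mul_le_mul hwM hzc (norm_nonneg _) hM
      have := mul_le_mul hw'M hzz (norm_nonneg _) hM
      linarith
    · nlinarith [mul_le_mul_of_nonneg_right hbad (by positivity : 0 ≤ 4 * M * V)]
  calc ‖s.centerMass w z - s.centerMass w' z'‖
      ≤ (∑ i ∈ s, w i)⁻¹ * (#s * ((2 * V + M) * ω + 4 * M * V * η)) :=
        (norm_centerMass_sub_centerMass_le hwpos hw'pos.ne').trans (by gcongr)
    _ ≤ (#s * m)⁻¹ * (#s * ((2 * V + M) * ω + 4 * M * V * η)) := by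
        gcongr
        exact hsum_ge hw
    _ = ((2 * V + M) * ω + 4 * M * V * η) / m := by
        field_simp

end CenterMass

section SimDist

variable {d n : ℕ}

theorem card_filter_le_add_card_filter_lt (x y : Fin n → Fin d → ℝ) (δ : ℝ) :
    (#{i | ‖x i - y i‖ ≤ δ} : ℝ) + #{i | δ < ‖x i - y i‖} = n := by
  simp only [← not_le]
  exact_mod_cast (card_filter_add_card_filter_not _).trans (card_fin n)

theorem simDist_le_of_card_filter_lt_le {x y : Fin n → Fin d → ℝ} {ε : ℝ} (hε : 0 ≤ ε)
    (h : (#{i | ε < ‖x i - y i‖} : ℝ) ≤ ε * n) : simDist x y ≤ ε :=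
  csInf_le ⟨0, fun _ hδ => hδ.1⟩ ⟨hε, by linarith [card_filter_le_add_card_filter_lt x y ε]⟩

theorem card_filter_lt_le_of_simDist_lt {x y : Fin n → Fin d → ℝ} {δ : ℝ} (h : simDist x y < δ) :
    (#{i | δ < ‖x i - y i‖} : ℝ) ≤ δ * n := by
  have hne : {δ : ℝ | 0 ≤ δ ∧ (1 - δ) * n ≤ #{i | ‖x i - y i‖ ≤ δ}}.Nonempty :=
    ⟨1, zero_le_one, by simp⟩
  obtain ⟨δ', ⟨-, hδ'⟩, hlt⟩ := (csInf_lt_iff ⟨0, fun _ hδ => hδ.1⟩ hne).1 h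
  have hmono : (#{i | ‖x i - y i‖ ≤ δ'} : ℝ) ≤ #{i | ‖x i - y i‖ ≤ δ} := by
    exact_mod_cast card_le_card <|
      monotone_filter_right univ fun i _ (hi : ‖x i - y i‖ ≤ δ') => hi.trans hlt.le
  nlinarith [card_filter_le_add_card_filter_lt x y δ, (n.cast_nonneg : (0 : ℝ) ≤ n)]

end SimDist

theorem Fin.card_filter_mul_succ_lt_le {N : ℕ} {η b : ℝ} (hη : 0 < η) (hb : 0 ≤ b) :
    (#{j : Fin N | η * ((j : ℕ) + 1) < b} : ℝ) ≤ b / η := by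
  have hsub : univ.filter (fun j : Fin N => η * ((j : ℕ) + 1) < b) ⊆
      univ.filter (fun j : Fin N => (j : ℕ) < ⌊b / η⌋₊) :=
    monotone_filter_right _ fun j _ hj => by
      rw [← mul_comm, ← lt_div_iff₀ hη] at hj
      exact Nat.lt_of_succ_le (Nat.le_floor (by exact_mod_cast hj.le))
  calc (#{j : Fin N | η * ((j : ℕ) + 1) < b} : ℝ) ≤ ⌊b / η⌋₊ := by
        exact_mod_cast (card_le_card hsub).trans (card_filter_val_lt.trans_le (min_le_right _ _))
    _ ≤ b / η := Nat.floor_le (by positivity)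

theorem Fin.card_filter_le_of_imp_mem_or {N : ℕ} {B : Finset (Fin N)} {η : ℝ} (hη : 0 < η)
    {Q : Fin N → Prop} [DecidablePred Q] (hQ : ∀ j, Q j → j ∈ B ∨ η * ((j : ℕ) + 1) < #B) :
    (#{j | Q j} : ℝ) ≤ #B * (1 + η⁻¹) :=
  calc (#{j | Q j} : ℝ)
      ≤ #B + #{j : Fin N | η * ((j : ℕ) + 1) < #B} := by
        have hsub : univ.filter Q ⊆ B ∪ univ.filter fun j : Fin N => η * ((j : ℕ) + 1) < #B :=
          fun j hj => by simpa [mem_union] using hQ j (mem_filter.1 hj).2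
        exact_mod_cast (card_le_card hsub).trans (card_union_le _ _)
    _ ≤ #B + #B / η := by grw [card_filter_mul_succ_lt_le hη (Nat.cast_nonneg _)]
    _ = #B * (1 + η⁻¹) := by ring

theorem AttentionLayer.norm_attn_le {d n : ℕ} (L : AttentionLayer d) {x : Fin n → Fin d → ℝ}
    {V : ℝ} (hx : ∀ i, ‖L.val (x i)‖ ≤ V) (j : Fin n) : ‖L.attn x j‖ ≤ V :=
  norm_centerMass_le (fun _ _ => (L.w_pos _ _ _).le)
    (sum_pos (fun _ _ => L.w_pos _ _ _) ⟨j, mem_Iic.2 le_rfl⟩) fun i _ => hx i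

theorem AttentionLayer.norm_attn_sub_attn_le {d n : ℕ} (L : AttentionLayer d)
    {C : Set (Fin d → ℝ)} {m M V θ κ η : ℝ} (hm : 0 < m) (hκ : 0 ≤ κ)
    (hw : ∀ t ∈ C ×ˢ C ×ˢ C, m ≤ L.w t.1 t.2.1 t.2.2 ∧ L.w t.1 t.2.1 t.2.2 ≤ M)
    (hV : ∀ a ∈ C, ‖L.val a‖ ≤ V)
    (hwθ : ∀ t ∈ C ×ˢ C ×ˢ C, ∀ t' ∈ C ×ˢ C ×ˢ C, dist t t' ≤ θ →
      dist (L.w t.1 t.2.1 t.2.2) (L.w t'.1 t'.2.1 t'.2.2) ≤ κ)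
    (hvθ : ∀ a ∈ C, ∀ b ∈ C, dist a b ≤ θ → dist (L.val a) (L.val b) ≤ κ)
    (hp : ∀ i j, L.p i j ∈ C) {x y : Fin n → Fin d → ℝ} (hx : ∀ i, x i ∈ C)
    (hy : ∀ i, y i ∈ C) (j : Fin n) (hj : ‖x j - y j‖ ≤ θ)
    (hbad : (#{i ∈ Iic j | θ < ‖x i - y i‖} : ℝ) ≤ η * #(Iic j)) :
    ‖L.attn x j - L.attn y j‖ ≤ ((2 * V + M) * κ + 4 * M * V * η) / m := by
  have hmem : ∀ z : Fin n → Fin d → ℝ, (∀ i, z i ∈ C) → ∀ i, (z i, z j, L.p i j) ∈ C ×ˢ C ×ˢ C :=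
    fun z hz i => ⟨hz i, hz j, hp i j⟩
  refine (Iic j).norm_centerMass_sub_centerMass_le_of_card_filter_le ⟨j, mem_Iic.2 le_rfl⟩ _ hm hκ
    (fun i _ => hw _ (hmem x hx i)) (fun i _ => hw _ (hmem y hy i)) (fun i _ => hV _ (hx i))
    (fun i _ => hV _ (hy i)) (fun i _ hi => ?_) hbad
  have hxy : ‖x i - y i‖ ≤ θ := not_lt.1 hi
  rw [← Real.dist_eq, ← dist_eq_norm]
  refine ⟨hwθ _ (hmem x hx i) _ (hmem y hy i) ?_, hvθ _ (hx i) _ (hy i) (by rwa [dist_eq_norm])⟩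
  rw [Prod.dist_eq, Prod.dist_eq, dist_self, dist_eq_norm, dist_eq_norm]
  exact max_le hxy (max_le hj (le_trans (norm_nonneg _) hxy))

theorem AttentionLayer.exists_forall_norm_apply_sub_le {d : ℕ} (L : AttentionLayer d)
    (hL : L.CompactPE) {K : Set (Fin d → ℝ)} (hK : IsCompact K) {ε : ℝ} (hε : 0 < ε) :
    ∃ θ > 0, ∃ η > 0, ∀ (n : ℕ) (x y : Fin n → Fin d → ℝ), (∀ i, x i ∈ K) → (∀ i, y i ∈ K) →
      ∀ j, ‖x j - y j‖ ≤ θ → (#{i ∈ Iic j | θ < ‖x i - y i‖} : ℝ) ≤ η * #(Iic j) →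
        ‖L.apply x j - L.apply y j‖ ≤ ε := by
  obtain ⟨P, hP, hp⟩ := hL
  set C := K ∪ P
  have hC : IsCompact C := hK.union hP
  have hC3 : IsCompact (C ×ˢ C ×ˢ C) := hC.prod (hC.prod hC)
  obtain ⟨m, hm, hmw⟩ :=
    hC3.exists_forall_le' L.w_cont.continuousOn (a := 0) fun _ _ => L.w_pos _ _ _
  obtain ⟨M, hM, hMw⟩ :=
    (hC3.image_of_continuousOn L.w_cont.continuousOn).isBounded.exists_pos_norm_le
  obtain ⟨V, hV, hVval⟩ :=
    (hC.image_of_continuousOn L.val_cont.continuousOn).isBounded.exists_pos_norm_le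
  obtain ⟨δ, hδ, hF⟩ := Metric.uniformContinuousOn_iff_le.1
    (((isCompact_closedBall 0 V).prod hC).uniformContinuousOn_of_continuous
      L.F_cont.continuousOn) ε hε
  -- `κ` is chosen so that the attention bound `((2V + M)κ + 4MVκ) / m` equals `δ`
  set κ := m * δ / (2 * V + M + 4 * M * V)
  have hκ : 0 < κ := by positivity
  obtain ⟨θw, hθw, hw⟩ := Metric.uniformContinuousOn_iff_le.1
    (hC3.uniformContinuousOn_of_continuous L.w_cont.continuousOn) κ hκ
  obtain ⟨θv, hθv, hv⟩ := Metric.uniformContinuousOn_iff_le.1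
    (hC.uniformContinuousOn_of_continuous L.val_cont.continuousOn) κ hκ
  set θ := min (min θw θv) δ
  refine ⟨θ, by positivity, κ, hκ, fun n x y hx hy j hj hbad => ?_⟩
  have hxC : ∀ i, x i ∈ C := fun i => Or.inl (hx i)
  have hyC : ∀ i, y i ∈ C := fun i => Or.inl (hy i)
  have hattn : ‖L.attn x j - L.attn y j‖ ≤ δ := by
    refine (L.norm_attn_sub_attn_le hm hκ.le
      (fun t ht => ⟨hmw t ht, (le_abs_self _).trans (hMw _ ⟨t, ht, rfl⟩)⟩)
      (fun a ha => hVval _ ⟨a, ha, rfl⟩)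
      (fun t ht t' ht' h => hw t ht t' ht' (h.trans ((min_le_left _ _).trans (min_le_left _ _))))
      (fun a ha b hb h => hv a ha b hb (h.trans ((min_le_left _ _).trans (min_le_right _ _))))
      (fun i j => Or.inr (hp i j)) hxC hyC j hj hbad).trans_eq ?_
    simp only [κ]
    field_simp
  have hattn_mem : ∀ z : Fin n → Fin d → ℝ, (∀ i, z i ∈ C) → L.attn z j ∈ Metric.closedBall 0 V :=
    fun z hz => mem_closedBall_zero_iff.2 (L.norm_attn_le (fun i => hVval _ ⟨z i, hz i, rfl⟩) j)
  rw [AttentionLayer.apply, AttentionLayer.apply, ← dist_eq_norm]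
  refine hF (_, x j) ⟨hattn_mem x hxC, hxC j⟩ (_, y j) ⟨hattn_mem y hyC, hyC j⟩ ?_
  rw [Prod.dist_eq, dist_eq_norm, dist_eq_norm]
  exact max_le hattn (hj.trans (min_le_right _ _))

/-- **Main lemma.** Global similarity together with last-position similarity is preserved
through a decoder-only attention layer with compact positional encoding. -/
theorem attention_layer_sim_preserved {d : ℕ} (L : AttentionLayer d) (hL : L.CompactPE)
    (K : Set (Fin d → ℝ)) (hK : IsCompact K) :
    ∀ ε : ℝ, 0 < ε → ∃ δ : ℝ, 0 < δ ∧ ∀ (n : ℕ) (x y : Fin (n + 1) → (Fin d → ℝ)),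
      (∀ i, x i ∈ K) → (∀ i, y i ∈ K) →
      simDist x y ≤ δ → ‖x (Fin.last n) - y (Fin.last n)‖ ≤ δ →
      simDist (L.apply x) (L.apply y) ≤ ε ∧
        ‖L.apply x (Fin.last n) - L.apply y (Fin.last n)‖ ≤ ε := by
  intro ε hε
  obtain ⟨θ, hθ, η, hη, hstable⟩ := L.exists_forall_norm_apply_sub_le hL hK hε
  set τ := min θ (min η (ε / (1 + η⁻¹)))
  have hτ : 0 < τ := by positivity
  refine ⟨τ / 2, by positivity, fun n x y hx hy hsim hlast => ?_⟩
  set bad := univ.filter fun i => τ < ‖x i - y i‖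
  have hbad : (#bad : ℝ) ≤ τ * (n + 1) := by
    simpa using card_filter_lt_le_of_simDist_lt (hsim.trans_lt (half_lt_self hτ))
  have hout : ∀ j ∉ bad, (#bad : ℝ) ≤ η * ((j : ℕ) + 1) →
      ‖L.apply x j - L.apply y j‖ ≤ ε := by
    intro j hj hjbad
    have hjτ : ‖x j - y j‖ ≤ τ := by simpa [bad] using hj
    refine hstable _ x y hx hy j (hjτ.trans (min_le_left _ _)) ?_
    rw [Fin.card_Iic]
    refine le_trans ?_ (by exact_mod_cast hjbad)
    exact_mod_cast card_le_card fun i hi =>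
      mem_filter.2 ⟨mem_univ i, (min_le_left _ _).trans_lt (mem_filter.1 hi).2⟩
  refine ⟨simDist_le_of_card_filter_lt_le hε.le ?_, hout (Fin.last n) ?_ ?_⟩
  · have hτε : τ * (1 + η⁻¹) ≤ ε :=
      (le_div_iff₀ (by positivity)).1 ((min_le_right _ _).trans (min_le_right _ _))
    calc _ ≤ (#bad : ℝ) * (1 + η⁻¹) := Fin.card_filter_le_of_imp_mem_or hη fun j hj => by
          by_contra h
          rw [not_or, not_lt] at h
          exact not_lt.2 (hout j h.1 h.2) hj
      _ ≤ ε * ↑(n + 1) := by push_cast; nlinarith [inv_pos.2 hη]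
  · simpa [bad] using hlast.trans (half_le_self hτ.le)
  · rw [Fin.val_last]
    exact hbad.trans (by gcongr; exact (min_le_right _ _).trans (min_le_left _ _))
end

section
/- Let L be a d-dimensional decoder-only attention layer with compact positional encoding and let K ⊆ ℝ^d be compact. Then for every ε > 0 there exists δ > 0 such that for every n ∈ ℕ and all sequences x, x̂ ∈ K^n: if sim(x, x̂) ≤ δ and ‖x_n − x̂_n‖_∞ ≤ δ, then ‖y_n − ŷ_n‖_∞ ≤ ε, where y_n and ŷ_n are the n-th output vectors of L on x and x̂ respectively. -/
open Finset Filter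

/-!
Write `φ (x_i, x_j, p(i, j)) = (w_ij, w_ij • v_i) ∈ ℝ × ℝ^d`. The last output is
`F (u.1⁻¹ • u.2, x_n)`, where `u` is the average of the `φ`-values over all positions. These
averages stay in a fixed compact convex set on which `u.1` is bounded away from `0`, so the last
output is a uniformly continuous function of `(u, x_n)`. Since `x_n` enters every `φ`-value,
`sim(x, x̂) ≤ δ` and `‖x_n - x̂_n‖ ≤ δ` say that all but a `δ`-fraction of the arguments of `φ`
move by at most `δ`, which moves the average of the bounded, uniformly continuous `φ` only a
little.
-/

section Averages

variable {V : Type*} [SeminormedAddCommGroup V]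

theorem norm_sum_sub_sum_le_of_subset {ι : Type*} [DecidableEq ι] {s b : Finset ι} (hb : b ⊆ s)
    {f g : ι → V} {η B : ℝ} (hgood : ∀ i ∈ s \ b, ‖f i - g i‖ ≤ η)
    (hbad : ∀ i ∈ b, ‖f i - g i‖ ≤ B) :
    ‖∑ i ∈ s, f i - ∑ i ∈ s, g i‖ ≤ #(s \ b) * η + #b * B := by
  rw [← sum_sub_distrib, ← sum_sdiff hb]
  refine (norm_add_le _ _).trans (add_le_add ?_ ?_)
  · simpa only [nsmul_eq_mul] using (norm_sum_le _ _).trans (sum_le_card_nsmul _ _ _ hgood)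
  · simpa only [nsmul_eq_mul] using (norm_sum_le _ _).trans (sum_le_card_nsmul _ _ _ hbad)

theorem Convex.inv_card_smul_sum_mem [Module ℝ V] {C : Set V} (hC : Convex ℝ C) {N : ℕ}
    [NeZero N] {z : Fin N → V} (hz : ∀ i, z i ∈ C) : (N : ℝ)⁻¹ • ∑ i, z i ∈ C := by
  rw [smul_sum]
  refine hC.sum_mem (fun _ _ => by positivity) ?_ fun i _ => hz i
  simp [NeZero.ne N]

theorem IsCompact.exists_dist_average_lt {α : Type*} [PseudoMetricSpace α] {T : Set α}
    [NormedSpace ℝ V] (hT : IsCompact T) {φ : α → V} (hφ : ContinuousOn φ T) {η : ℝ}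
    (hη : 0 < η) :
    ∃ δ > 0, ∀ (N : ℕ) (b : Finset (Fin N)) (u u' : Fin N → α), (∀ i, u i ∈ T) →
      (∀ i, u' i ∈ T) → (#b : ℝ) ≤ δ * N → (∀ i ∉ b, dist (u i) (u' i) ≤ δ) →
      dist ((N : ℝ)⁻¹ • ∑ i, φ (u i)) ((N : ℝ)⁻¹ • ∑ i, φ (u' i)) < η := by
  obtain ⟨R, hR, hφR⟩ := (hT.image_of_continuousOn hφ).isBounded.exists_pos_norm_le
  obtain ⟨δ₀, hδ₀, hφδ⟩ := Metric.uniformContinuousOn_iff.mp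
    (hT.uniformContinuousOn_of_continuous hφ) (η / 2) (half_pos hη)
  refine ⟨min (δ₀ / 2) (η / (8 * R)), by positivity, fun N b u u' hu hu' hb hgood => ?_⟩
  have hδ₀' : min (δ₀ / 2) (η / (8 * R)) < δ₀ := (min_le_left _ _).trans_lt (half_lt_self hδ₀)
  have hsum : ‖∑ i, φ (u i) - ∑ i, φ (u' i)‖ ≤ #(univ \ b) * (η / 2) + #b * (2 * R) := by
    refine norm_sum_sub_sum_le_of_subset (subset_univ b) (fun i hi => ?_) fun i _ => ?_
    · rw [← dist_eq_norm]
      exact (hφδ _ (hu i) _ (hu' i) ((hgood i (mem_sdiff.mp hi).2).trans_lt hδ₀')).le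
    · refine (norm_sub_le _ _).trans ?_
      linarith [hφR _ ⟨_, hu i, rfl⟩, hφR _ ⟨_, hu' i, rfl⟩]
  have hcard : (#(univ \ b) : ℝ) ≤ N := by exact_mod_cast (card_le_univ _).trans_eq (by simp)
  rcases (Nat.cast_nonneg (α := ℝ) N).eq_or_lt with hN | hN
  · simp [← hN, hη]
  rw [dist_eq_norm, ← smul_sub, norm_smul, norm_inv, Real.norm_natCast, inv_mul_lt_iff₀ hN]
  calc _ ≤ #(univ \ b) * (η / 2) + #b * (2 * R) := hsum
    _ ≤ N * (η / 2) + min (δ₀ / 2) (η / (8 * R)) * N * (2 * R) := by gcongr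
    _ ≤ N * (η / 2) + η / (8 * R) * N * (2 * R) := by gcongr; exact min_le_right _ _
    _ = N * η * (3 / 4) := by field_simp; ring
    _ < N * η := by nlinarith

end Averages

theorem IsCompact.exists_isCompact_convex_superset_of_fst_pos {E : Type*}
    [NormedAddCommGroup E] [NormedSpace ℝ E] [ProperSpace E] {T : Set (ℝ × E)}
    (hT : IsCompact T) (hpos : ∀ u ∈ T, 0 < u.1) :
    ∃ C, IsCompact C ∧ Convex ℝ C ∧ T ⊆ C ∧ ∀ u ∈ C, 0 < u.1 := by
  obtain ⟨R, hR⟩ := hT.isBounded.subset_closedBall 0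
  obtain ⟨c, hc, hcT⟩ := (hT.image_of_continuousOn
    (continuousOn_fst.inv₀ fun u hu => (hpos u hu).ne')).isBounded.exists_pos_norm_le
  refine ⟨{u | c⁻¹ ≤ u.1} ∩ Metric.closedBall 0 R, ?_, ?_, fun u hu => ⟨?_, hR hu⟩,
    fun u hu => (inv_pos.mpr hc).trans_le hu.1⟩
  · exact (isCompact_closedBall 0 R).inter_left (isClosed_le continuous_const continuous_fst)
  · exact ((convex_Ici c⁻¹).linear_preimage (LinearMap.fst ℝ ℝ E)).inter (convex_closedBall 0 R)
  · have := hcT _ ⟨u, hu, rfl⟩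
    rw [Pi.inv_apply, norm_inv, Real.norm_of_nonneg (hpos u hu).le] at this
    exact inv_le_of_inv_le₀ (hpos u hu) this

theorem card_lt_norm_sub_le_mul_of_simDist_lt {d n : ℕ} {x y : Fin n → Fin d → ℝ} {t : ℝ}
    (h : simDist x y < t) : (#{i | t < ‖x i - y i‖} : ℝ) ≤ t * n := by
  obtain ⟨a, ⟨-, ha⟩, hat⟩ := exists_lt_of_csInf_lt (by exact ⟨1, by norm_num, by simp⟩) h
  have hsplit := card_filter_add_card_filter_not (s := univ) fun i => ‖x i - y i‖ ≤ t
  have hmono : #{i | ‖x i - y i‖ ≤ a} ≤ #{i | ‖x i - y i‖ ≤ t} :=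
    card_le_card (monotone_filter_right _ fun _ _ h => h.trans hat.le)
  simp only [not_le, card_univ, Fintype.card_fin] at hsplit
  have : (#{i | ‖x i - y i‖ ≤ t} : ℝ) + #{i | t < ‖x i - y i‖} = n := by exact_mod_cast hsplit
  have : (#{i | ‖x i - y i‖ ≤ a} : ℝ) ≤ #{i | ‖x i - y i‖ ≤ t} := by exact_mod_cast hmono
  nlinarith [(Nat.cast_nonneg (α := ℝ) n)]

noncomputable def divByWeight {E : Type*} [AddCommGroup E] [Module ℝ E] (u : ℝ × E) : E :=
  u.1⁻¹ • u.2

theorem divByWeight_smul {E : Type*} [AddCommGroup E] [Module ℝ E] {c : ℝ} (hc : c ≠ 0)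
    (u : ℝ × E) : divByWeight (c • u) = divByWeight u := by
  simp only [divByWeight, Prod.smul_fst, Prod.smul_snd, smul_eq_mul, smul_smul, mul_inv_rev,
    inv_mul_cancel_right₀ hc]

theorem continuousOn_divByWeight {E : Type*} [NormedAddCommGroup E] [NormedSpace ℝ E] :
    ContinuousOn (divByWeight : ℝ × E → E) {u | u.1 ≠ 0} :=
  (continuousOn_fst.inv₀ fun _ h => h).smul continuousOn_snd

namespace AttentionLayer

variable {d : ℕ} (L : AttentionLayer d)

/-- The pair `(w_{ij}, w_{ij} v_i)` as a function of `(x_i, x_j, p(i, j))`. -/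
noncomputable def weightedValue (t : (Fin d → ℝ) × (Fin d → ℝ) × (Fin d → ℝ)) :
    ℝ × (Fin d → ℝ) :=
  (L.w t.1 t.2.1 t.2.2, L.w t.1 t.2.1 t.2.2 • L.val t.1)

theorem continuous_weightedValue : Continuous L.weightedValue :=
  L.w_cont.prodMk (L.w_cont.smul (L.val_cont.comp continuous_fst))

theorem weightedValue_fst_pos (t : (Fin d → ℝ) × (Fin d → ℝ) × (Fin d → ℝ)) :
    0 < (L.weightedValue t).1 :=
  L.w_pos _ _ _

theorem continuousOn_F_divByWeight :
    ContinuousOn (fun u : (ℝ × (Fin d → ℝ)) × (Fin d → ℝ) => L.F (divByWeight u.1) u.2)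
      {u | u.1.1 ≠ 0} :=
  L.F_cont.comp_continuousOn
    ((continuousOn_divByWeight.comp continuousOn_fst fun _ h => h).prodMk continuousOn_snd)

theorem attn_eq_divByWeight {n : ℕ} (x : Fin n → Fin d → ℝ) (j : Fin n) :
    L.attn x j = divByWeight (∑ i ∈ Iic j, L.weightedValue (x i, x j, L.p i j)) := by
  simp [attn, divByWeight, weightedValue, Prod.fst_sum, Prod.snd_sum]

theorem apply_last_eq {n : ℕ} (x : Fin (n + 1) → Fin d → ℝ) :
    L.apply x (Fin.last n) = L.F (divByWeight (((n + 1 : ℕ) : ℝ)⁻¹ •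
      ∑ i, L.weightedValue (x i, x (Fin.last n), L.p i n))) (x (Fin.last n)) := by
  rw [divByWeight_smul (by positivity), apply, attn_eq_divByWeight, ← Fin.top_eq_last, Iic_top]
  rfl

end AttentionLayer

/-- **Weak lemma.** Global similarity together with last-position similarity of the inputs
forces closeness of the last output vectors of a decoder-only attention layer with compact
positional encoding. -/
theorem attention_layer_last_output_close {d : ℕ} (L : AttentionLayer d) (hL : L.CompactPE)
    (K : Set (Fin d → ℝ)) (hK : IsCompact K) :
    ∀ ε : ℝ, 0 < ε → ∃ δ : ℝ, 0 < δ ∧ ∀ (n : ℕ) (x y : Fin (n + 1) → (Fin d → ℝ)),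
      (∀ i, x i ∈ K) → (∀ i, y i ∈ K) →
      simDist x y ≤ δ → ‖x (Fin.last n) - y (Fin.last n)‖ ≤ δ →
      ‖L.apply x (Fin.last n) - L.apply y (Fin.last n)‖ ≤ ε := by
  intro ε hε
  obtain ⟨P, hP, hpP⟩ := hL
  have hT : IsCompact (K ×ˢ K ×ˢ P) := hK.prod (hK.prod hP)
  obtain ⟨C, hC, hCconv, hTC, hCpos⟩ :=
    (hT.image L.continuous_weightedValue).exists_isCompact_convex_superset_of_fst_pos
      (by rintro _ ⟨t, -, rfl⟩; exact L.weightedValue_fst_pos t)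
  obtain ⟨δG, hδG, hGδ⟩ := Metric.uniformContinuousOn_iff.mp
    ((hC.prod hK).uniformContinuousOn_of_continuous
      (L.continuousOn_F_divByWeight.mono fun u hu => (hCpos _ hu.1).ne')) ε hε
  obtain ⟨δ, hδ, havg⟩ := hT.exists_dist_average_lt L.continuous_weightedValue.continuousOn hδG
  refine ⟨min δ δG / 2, by positivity, fun n x y hx hy hsim hlast => ?_⟩
  have hδδ : min δ δG / 2 < δ := (half_lt_self (by positivity)).trans_le (min_le_left _ _)
  have hδG' : min δ δG / 2 < δG := (half_lt_self (by positivity)).trans_le (min_le_right _ _)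
  have hmemT (z : Fin (n + 1) → Fin d → ℝ) (hz : ∀ i, z i ∈ K) (i : Fin (n + 1)) :
      (z i, z (Fin.last n), L.p i n) ∈ K ×ˢ K ×ˢ P := ⟨hz i, hz _, hpP _ _⟩
  have hmemC (z : Fin (n + 1) → Fin d → ℝ) (hz : ∀ i, z i ∈ K) :=
    hCconv.inv_card_smul_sum_mem fun i => hTC ⟨_, hmemT z hz i, rfl⟩
  rw [← dist_eq_norm, L.apply_last_eq, L.apply_last_eq]
  refine (hGδ (_, _) ⟨hmemC x hx, hx _⟩ (_, _) ⟨hmemC y hy, hy _⟩ ?_).le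
  rw [Prod.dist_eq, max_lt_iff, dist_eq_norm (x _)]
  refine ⟨havg _ {i | δ < ‖x i - y i‖} _ _ (hmemT x hx) (hmemT y hy)
    (card_lt_norm_sub_le_mul_of_simDist_lt (hsim.trans_lt hδδ)) fun i hi => ?_,
    hlast.trans_lt hδG'⟩
  rw [mem_filter, not_and, not_lt] at hi
  rw [Prod.dist_eq, Prod.dist_eq, dist_self, dist_eq_norm, dist_eq_norm]
  exact max_le (hi (mem_univ i)) (max_le (hlast.trans hδδ.le) hδ.le)
end

section
/- Let L be a d-dimensional decoder-only attention layer with compact positional encoding and let K ⊆ ℝ^d be compact. Then for every ε > 0 there exists δ > 0 such that for every n ∈ ℕ and all sequences x, x̂ ∈ K^n: if sim(x, x̂) ≤ δ and ‖x_n − x̂_n‖_∞ ≤ δ, then ‖a_n − â_n‖_∞ ≤ ε, where a_n = (Σ_{i=1}^{n} w(x_i, x_n, p(i,n)) val(x_i))/(Σ_{i=1}^{n} w(x_i, x_n, p(i,n))) and â_n = (Σ_{i=1}^{n} w(x̂_i, x̂_n, p(i,n)) val(x̂_i))/(Σ_{i=1}^{n} w(x̂_i, x̂_n, p(i,n)))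 are the n-th attention vectors of L on x and x̂. -/
open Finset Filter

/-!
On the compact set `K × K × P` the attention weights lie in some `[c, C]` with `c > 0`, so each
of the `n + 1` positions carries at most `C / (c (n + 1))` of the attention mass. At positions
where the inputs are `δ`-close (and the last inputs are `δ`-close), uniform continuity makes the
weights and values nearly equal; the remaining positions, at most a `δ`-fraction by the
definition of `sim`, move the weighted average by `O(δ)` in total.
-/

section CenterMass

variable {ι E : Type*} [NormedAddCommGroup E] [NormedSpace ℝ E] {s : Finset ι}

theorem sum_abs_div_sum_sub_div_sum_le {w₁ w₂ : ι → ℝ} (hw₂ : ∀ i ∈ s, 0 ≤ w₂ i)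
    (h₁ : 0 < ∑ i ∈ s, w₁ i) (h₂ : 0 < ∑ i ∈ s, w₂ i) :
    ∑ i ∈ s, |w₁ i / ∑ j ∈ s, w₁ j - w₂ i / ∑ j ∈ s, w₂ j| ≤
      2 * (∑ i ∈ s, |w₁ i - w₂ i|) / ∑ i ∈ s, w₁ i := by
  set S₁ := ∑ i ∈ s, w₁ i
  set S₂ := ∑ i ∈ s, w₂ i
  have hpoint : ∀ i ∈ s, |w₁ i / S₁ - w₂ i / S₂| ≤
      |w₁ i - w₂ i| / S₁ + w₂ i * (|S₂ - S₁| / (S₁ * S₂)) := by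
    intro i hi
    have hsplit : w₁ i / S₁ - w₂ i / S₂ = (w₁ i - w₂ i) / S₁ + w₂ i * ((S₂ - S₁) / (S₁ * S₂)) := by
      field_simp
      ring
    rw [hsplit]
    refine (abs_add_le _ _).trans_eq ?_
    rw [abs_div, abs_of_pos h₁, abs_mul, abs_of_nonneg (hw₂ i hi), abs_div,
      abs_of_pos (mul_pos h₁ h₂)]
  have hS : |S₂ - S₁| ≤ ∑ i ∈ s, |w₁ i - w₂ i| := by
    rw [← sum_sub_distrib]
    exact (abs_sum_le_sum_abs _ _).trans_eq (sum_congr rfl fun i _ => abs_sub_comm _ _)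
  calc ∑ i ∈ s, |w₁ i / S₁ - w₂ i / S₂|
      ≤ ∑ i ∈ s, (|w₁ i - w₂ i| / S₁ + w₂ i * (|S₂ - S₁| / (S₁ * S₂))) := sum_le_sum hpoint
    _ = (∑ i ∈ s, |w₁ i - w₂ i|) / S₁ + |S₂ - S₁| / S₁ := by
      rw [sum_add_distrib, ← sum_div, ← sum_mul]
      change _ + S₂ * _ = _
      field_simp
    _ ≤ 2 * (∑ i ∈ s, |w₁ i - w₂ i|) / S₁ := by
      rw [two_mul, add_div]
      gcongr

theorem norm_centerMass_sub_centerMass_le_s3 {w₁ w₂ : ι → ℝ} {z₁ z₂ : ι → E} {M : ℝ}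
    (hw₁ : ∀ i ∈ s, 0 ≤ w₁ i) (hz₂ : ∀ i ∈ s, ‖z₂ i‖ ≤ M) :
    ‖s.centerMass w₁ z₁ - s.centerMass w₂ z₂‖ ≤
      ∑ i ∈ s, w₁ i / (∑ j ∈ s, w₁ j) * ‖z₁ i - z₂ i‖ +
        M * ∑ i ∈ s, |w₁ i / ∑ j ∈ s, w₁ j - w₂ i / ∑ j ∈ s, w₂ j| := by
  set S₁ := ∑ i ∈ s, w₁ i
  set S₂ := ∑ i ∈ s, w₂ i
  have hS₁ : 0 ≤ S₁ := sum_nonneg hw₁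
  have hsplit : s.centerMass w₁ z₁ - s.centerMass w₂ z₂ =
      ∑ i ∈ s, ((w₁ i / S₁) • (z₁ i - z₂ i) + (w₁ i / S₁ - w₂ i / S₂) • z₂ i) := by
    simp only [centerMass, smul_sum, ← sum_sub_distrib, smul_smul]
    refine sum_congr rfl fun i _ => ?_
    rw [div_eq_inv_mul, div_eq_inv_mul]
    module
  rw [hsplit, mul_sum, ← sum_add_distrib]
  refine (norm_sum_le _ _).trans (sum_le_sum fun i hi => (norm_add_le _ _).trans ?_)
  rw [norm_smul, norm_smul, Real.norm_of_nonneg (div_nonneg (hw₁ i hi) hS₁), Real.norm_eq_abs,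
    mul_comm M]
  gcongr
  exact hz₂ i hi

theorem norm_centerMass_sub_centerMass_le_of_bounds {w₁ w₂ : ι → ℝ} {z₁ z₂ : ι → E}
    {c C M : ℝ} (hc : 0 < c) (hs : s.Nonempty) (hw₁ : ∀ i ∈ s, c ≤ w₁ i ∧ w₁ i ≤ C)
    (hw₂ : ∀ i ∈ s, 0 < w₂ i) (hz₂ : ∀ i ∈ s, ‖z₂ i‖ ≤ M) :
    ‖s.centerMass w₁ z₁ - s.centerMass w₂ z₂‖ ≤
      (∑ i ∈ s, (C * ‖z₁ i - z₂ i‖ + 2 * M * |w₁ i - w₂ i|)) / (c * #s) := by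
  obtain ⟨i₀, hi₀⟩ := hs
  have hM : 0 ≤ M := (norm_nonneg _).trans (hz₂ i₀ hi₀)
  have hcs : 0 < c * #s := mul_pos hc (by exact_mod_cast card_pos.mpr ⟨i₀, hi₀⟩)
  have hS₁ : c * #s ≤ ∑ i ∈ s, w₁ i := by
    rw [mul_comm, ← nsmul_eq_mul]
    exact card_nsmul_le_sum _ _ _ fun i hi => (hw₁ i hi).1
  have hS₂ : 0 < ∑ i ∈ s, w₂ i := sum_pos hw₂ ⟨i₀, hi₀⟩
  have hfirst : ∑ i ∈ s, w₁ i / (∑ j ∈ s, w₁ j) * ‖z₁ i - z₂ i‖ ≤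
      C * (∑ i ∈ s, ‖z₁ i - z₂ i‖) / (c * #s) := by
    rw [mul_sum, sum_div]
    refine sum_le_sum fun i hi => ?_
    obtain ⟨hcw, hwC⟩ := hw₁ i hi
    rw [mul_div_right_comm]
    gcongr
    linarith
  have hsecond := sum_abs_div_sum_sub_div_sum_le (fun i hi => (hw₂ i hi).le)
    (hcs.trans_le hS₁) hS₂
  calc _ ≤ _ := norm_centerMass_sub_centerMass_le_s3 (fun i hi => (hc.trans_le (hw₁ i hi).1).le) hz₂
    _ ≤ C * (∑ i ∈ s, ‖z₁ i - z₂ i‖) / (c * #s) +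
        M * (2 * (∑ i ∈ s, |w₁ i - w₂ i|) / (c * #s)) := by
      gcongr
      refine hsecond.trans ?_
      gcongr
    _ = _ := by
      rw [sum_add_distrib, ← mul_sum, ← mul_sum]
      ring

end CenterMass

theorem sum_le_of_card_filter_ge {ι : Type*} {s : Finset ι} {f : ι → ℝ} {p : ι → Prop}
    [DecidablePred p] {a b δ : ℝ} (ha : 0 ≤ a) (hb : 0 ≤ b) (hp : ∀ i ∈ s, p i → f i ≤ a)
    (hf : ∀ i ∈ s, f i ≤ b) (hcard : (1 - δ) * #s ≤ #{i ∈ s | p i}) :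
    ∑ i ∈ s, f i ≤ (a + b * δ) * #s := by
  have hsplit : (#{i ∈ s | p i} : ℝ) + #{i ∈ s | ¬p i} = #s := by
    exact_mod_cast card_filter_add_card_filter_not p
  have hgood : ∑ i ∈ s with p i, f i ≤ #{i ∈ s | p i} * a := by
    simpa using sum_le_card_nsmul _ _ _ fun i hi => hp i (mem_filter.1 hi).1 (mem_filter.1 hi).2
  have hbad : ∑ i ∈ s with ¬p i, f i ≤ #{i ∈ s | ¬p i} * b := by
    simpa using sum_le_card_nsmul _ _ _ fun i hi => hf i (mem_filter.1 hi).1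
  have hle : (#{i ∈ s | p i} : ℝ) ≤ #s := by exact_mod_cast card_filter_le s p
  rw [← sum_filter_add_sum_filter_not s p]
  nlinarith

theorem card_filter_norm_sub_le_ge_of_simDist_lt {d n : ℕ} {x y : Fin n → Fin d → ℝ} {δ : ℝ}
    (h : simDist x y < δ) : (1 - δ) * n ≤ #{i | ‖x i - y i‖ ≤ δ} := by
  obtain ⟨δ', ⟨-, hδ'⟩, hlt⟩ := exists_lt_of_csInf_lt (⟨1, zero_le_one, by simp⟩ :
    Set.Nonempty {δ : ℝ | 0 ≤ δ ∧ (1 - δ) * n ≤ #{i | ‖x i - y i‖ ≤ δ}}) h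
  calc (1 - δ) * n ≤ (1 - δ') * n := by gcongr
    _ ≤ #{i | ‖x i - y i‖ ≤ δ'} := hδ'
    _ ≤ #{i | ‖x i - y i‖ ≤ δ} := by gcongr

theorem IsCompact.exists_pos_bound_of_continuousOn {α E : Type*} [TopologicalSpace α]
    [SeminormedAddGroup E] {s : Set α} {f : α → E} (hs : IsCompact s) (hf : ContinuousOn f s) :
    ∃ C > 0, ∀ x ∈ s, ‖f x‖ ≤ C := by
  obtain ⟨C, hC⟩ := hs.exists_bound_of_continuousOn hf
  exact ⟨max C 1, by positivity, fun x hx => (hC x hx).trans (le_max_left _ _)⟩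

namespace AttentionLayer

variable {d : ℕ} (L : AttentionLayer d) {K P : Set (Fin d → ℝ)}

theorem exists_weight_bounds_s3 (hK : IsCompact K) (hP : IsCompact P) :
    ∃ c C, 0 < c ∧ 0 < C ∧ ∀ a ∈ K, ∀ b ∈ K, ∀ q ∈ P, c ≤ L.w a b q ∧ L.w a b q ≤ C := by
  have hT := hK.prod (hK.prod hP)
  obtain ⟨c, hc, hcw⟩ := hT.exists_forall_le' L.w_cont.continuousOn fun t _ => L.w_pos _ _ _
  obtain ⟨C, hC, hwC⟩ := hT.exists_pos_bound_of_continuousOn L.w_cont.continuousOn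
  refine ⟨c, C, hc, hC, fun a ha b hb q hq => ⟨hcw (a, b, q) ⟨ha, hb, hq⟩, ?_⟩⟩
  exact (le_abs_self _).trans (hwC (a, b, q) ⟨ha, hb, hq⟩)

theorem exists_deviation_le (hK : IsCompact K) (hP : IsCompact P) {C M κ : ℝ} (hC : 0 ≤ C)
    (hM : 0 ≤ M) (hκ : 0 < κ) :
    ∃ η > 0, ∀ a ∈ K, ∀ a' ∈ K, ∀ b ∈ K, ∀ b' ∈ K, ∀ q ∈ P, dist a a' < η → dist b b' < η →
      C * ‖L.val a - L.val a'‖ + 2 * M * |L.w a b q - L.w a' b' q| ≤ κ := by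
  set θ := κ / (C + 2 * M + 1)
  have hθ : 0 < θ := by positivity
  obtain ⟨η₁, hη₁, hval⟩ := Metric.uniformContinuousOn_iff.1
    (hK.uniformContinuousOn_of_continuous L.val_cont.continuousOn) θ hθ
  obtain ⟨η₂, hη₂, hw⟩ := Metric.uniformContinuousOn_iff.1
    ((hK.prod (hK.prod hP)).uniformContinuousOn_of_continuous L.w_cont.continuousOn) θ hθ
  refine ⟨min η₁ η₂, lt_min hη₁ hη₂, fun a ha a' ha' b hb b' hb' q hq haa' hbb' => ?_⟩
  have hv : ‖L.val a - L.val a'‖ ≤ θ := by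
    rw [← dist_eq_norm]
    exact (hval a ha a' ha' (haa'.trans_le (min_le_left _ _))).le
  have hw' : |L.w a b q - L.w a' b' q| ≤ θ := by
    rw [← Real.dist_eq]
    refine (hw (a, b, q) ⟨ha, hb, hq⟩ (a', b', q) ⟨ha', hb', hq⟩ ?_).le
    simp only [Prod.dist_eq, dist_self]
    exact max_lt (haa'.trans_le (min_le_right _ _))
      (max_lt (hbb'.trans_le (min_le_right _ _)) hη₂)
  calc _ ≤ C * θ + 2 * M * θ := by gcongr
    _ = κ * ((C + 2 * M) / (C + 2 * M + 1)) := by ring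
    _ ≤ κ := mul_le_of_le_one_right hκ.le ((div_le_one (by positivity)).2 (by linarith))

-- `C * ‖Δval‖ + 2 * M * |Δw|` is the per-position deviation that `norm_attn_last_sub_le` sums.
theorem deviation_le {c C M : ℝ} (hc : 0 ≤ c)
    (hw : ∀ a ∈ K, ∀ b ∈ K, ∀ q ∈ P, c ≤ L.w a b q ∧ L.w a b q ≤ C)
    (hval : ∀ a ∈ K, ‖L.val a‖ ≤ M) {a a' b b' q : Fin d → ℝ} (ha : a ∈ K) (ha' : a' ∈ K)
    (hb : b ∈ K) (hb' : b' ∈ K) (hq : q ∈ P) :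
    C * ‖L.val a - L.val a'‖ + 2 * M * |L.w a b q - L.w a' b' q| ≤ 4 * M * C := by
  obtain ⟨hcw, hwC⟩ := hw a ha b hb q hq
  obtain ⟨hcw', hwC'⟩ := hw a' ha' b' hb' q hq
  have hv : ‖L.val a - L.val a'‖ ≤ 2 * M :=
    (norm_sub_le _ _).trans (by linarith [hval a ha, hval a' ha'])
  have hw' : |L.w a b q - L.w a' b' q| ≤ C := abs_sub_le_iff.2 ⟨by linarith, by linarith⟩
  have hM : 0 ≤ M := (norm_nonneg _).trans (hval a ha)
  calc _ ≤ C * (2 * M) + 2 * M * C := by gcongr; linarith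
    _ = 4 * M * C := by ring

theorem attn_last_eq_centerMass {n : ℕ} (x : Fin (n + 1) → Fin d → ℝ) :
    L.attn x (Fin.last n) =
      univ.centerMass (fun i => L.w (x i) (x (Fin.last n)) (L.p i n)) (fun i => L.val (x i)) := by
  rw [attn, centerMass, ← Fin.top_eq_last, Iic_top, Fin.top_eq_last, Fin.val_last]

theorem norm_attn_last_sub_le {c C M : ℝ} (hc : 0 < c)
    (hw : ∀ a ∈ K, ∀ b ∈ K, ∀ q ∈ P, c ≤ L.w a b q ∧ L.w a b q ≤ C)
    (hval : ∀ a ∈ K, ‖L.val a‖ ≤ M) (hpP : ∀ i j, L.p i j ∈ P) {n : ℕ}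
    {x y : Fin (n + 1) → Fin d → ℝ} (hx : ∀ i, x i ∈ K) (hy : ∀ i, y i ∈ K) :
    ‖L.attn x (Fin.last n) - L.attn y (Fin.last n)‖ ≤
      (∑ i, (C * ‖L.val (x i) - L.val (y i)‖ + 2 * M *
        |L.w (x i) (x (Fin.last n)) (L.p i n) - L.w (y i) (y (Fin.last n)) (L.p i n)|)) /
        (c * #(univ : Finset (Fin (n + 1)))) := by
  rw [L.attn_last_eq_centerMass, L.attn_last_eq_centerMass]
  exact norm_centerMass_sub_centerMass_le_of_bounds hc univ_nonempty
    (fun i _ => hw _ (hx i) _ (hx _) _ (hpP _ _)) (fun i _ => L.w_pos _ _ _)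
    (fun i _ => hval _ (hy i))

end AttentionLayer

/-- Global similarity together with last-position similarity of the inputs forces closeness
of the last attention vectors of a decoder-only attention layer with compact positional
encoding. -/
theorem attention_vector_close {d : ℕ} (L : AttentionLayer d) (hL : L.CompactPE)
    (K : Set (Fin d → ℝ)) (hK : IsCompact K) :
    ∀ ε : ℝ, 0 < ε → ∃ δ : ℝ, 0 < δ ∧ ∀ (n : ℕ) (x y : Fin (n + 1) → (Fin d → ℝ)),
      (∀ i, x i ∈ K) → (∀ i, y i ∈ K) →
      simDist x y ≤ δ → ‖x (Fin.last n) - y (Fin.last n)‖ ≤ δ →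
      ‖L.attn x (Fin.last n) - L.attn y (Fin.last n)‖ ≤ ε := by
  intro ε hε
  obtain ⟨P, hP, hpP⟩ := hL
  obtain ⟨c, C, hc, hC, hw⟩ := L.exists_weight_bounds_s3 hK hP
  obtain ⟨M, hM, hval⟩ := hK.exists_pos_bound_of_continuousOn L.val_cont.continuousOn
  obtain ⟨η, hη, hdev⟩ := L.exists_deviation_le hK hP hC.le hM.le (κ := ε * c / 2) (by positivity)
  set δ := min (η / 2) (ε * c / (8 * M * C))
  have hδ : 0 < δ := by positivity
  have hδη : δ < η := (min_le_left _ _).trans_lt (half_lt_self hη)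
  have hδε : 4 * M * C * δ ≤ ε * c / 2 := by
    have := min_le_right (η / 2) (ε * c / (8 * M * C))
    rw [le_div_iff₀ (by positivity)] at this
    linarith
  refine ⟨δ / 2, by positivity, fun n x y hx hy hsim hlast => ?_⟩
  have hgood : (1 - δ) * #(univ : Finset (Fin (n + 1))) ≤ #{i | ‖x i - y i‖ ≤ δ} := by
    rw [card_univ, Fintype.card_fin]
    exact card_filter_norm_sub_le_ge_of_simDist_lt (hsim.trans_lt (half_lt_self hδ))
  have hsum := sum_le_of_card_filter_ge (by positivity) (by positivity)
    (fun i _ hi => hdev _ (hx i) _ (hy i) _ (hx (Fin.last n)) _ (hy (Fin.last n)) _ (hpP i n)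
      (by rw [dist_eq_norm]; linarith) (by rw [dist_eq_norm]; linarith))
    (fun i _ => L.deviation_le hc.le hw hval (hx i) (hy i) (hx (Fin.last n)) (hy (Fin.last n))
      (hpP i n)) hgood
  refine (L.norm_attn_last_sub_le hc hw hval hpP hx hy).trans ?_
  rw [div_le_iff₀ (by positivity)]
  nlinarith
end

section
/- Let Σ be a finite alphabet, let T be a compact decoder-only Transformer over Σ, and let α ∈ Σ^ω be an infinite sequence eventually learned by T. Then there exists δ > 0 such that no infinite sequence β ∈ Σ^ω that differs from α in infinitely many positions and satisfies d_H(α, β) ≤ δ is eventually learned by T. -/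
open Finset Filter

/-!
Changing the input of a compact Transformer on a sparse set of positions, the last one excluded,
moves its output distribution by little. Indeed, on compact sets the attention weights are bounded
away from `0` and `∞`, so an attention vector, a weighted average over the prefix, barely feels a
sparse set of changed positions; the positions at which the changed ones are too dense in the
prefix are themselves sparse by a maximal inequality, so the property survives every layer.

If `β` is Hamming-close to `α` but differs from it infinitely often, there are arbitrarily long
prefixes on which `α` and `β` differ only sparsely, agree at the last position and disagree at the
next one. There a Transformer learning `α` prefers `α`'s next symbol by a fixed margin on both
prefixes, so it cannot prefer `β`'s.
-/

section PrefixStable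

variable {X Y Z : Type*} [PseudoMetricSpace X] [PseudoMetricSpace Y] [PseudoMetricSpace Z]

/-- Robustness of a sequence-to-sequence map at position `j`: the inputs may be changed
arbitrarily (within `K`) on a set `B` of density at most `θ` in the prefix up to `j`, and by at
most `η` elsewhere. -/
def PrefixStable (f : ∀ {n : ℕ}, (Fin n → X) → Fin n → Y) (K : Set X) : Prop :=
  ∀ ε > 0, ∃ θ > 0, ∃ η > 0, ∀ (n : ℕ) (x x' : Fin n → X) (B : Finset (Fin n)) (j : Fin n),
    (∀ i, x i ∈ K) → (∀ i, x' i ∈ K) → (∀ i ∉ B, dist (x i) (x' i) ≤ η) → j ∉ B →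
    (#(Iic j ∩ B) : ℝ) ≤ θ * ((j : ℕ) + 1) → dist (f x j) (f x' j) ≤ ε

theorem prefixStable_id (K : Set X) : PrefixStable (fun x => x) K :=
  fun ε hε => ⟨1, one_pos, ε, hε, fun _ _ _ _ _ _ _ hxx' hj _ => hxx' _ hj⟩

/-- A discrete maximal inequality: the largest index in the set already controls its size. -/
theorem mul_card_filter_lt_le_of_monotone {n : ℕ} {c : Fin n → ℝ} (hc : Monotone c) {θ : ℝ}
    (hθ : 0 < θ) (j : Fin n) (hcj : 0 ≤ c j) :
    θ * #{i ∈ Iic j | θ * (i.val + 1 : ℝ) < c i} ≤ c j := by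
  set I := {i ∈ Iic j | θ * (i.val + 1 : ℝ) < c i}
  rcases I.eq_empty_or_nonempty with hI | hI
  · simpa [hI] using hcj
  have hm : I.max' hI ∈ I := I.max'_mem hI
  rw [mem_filter, mem_Iic] at hm
  have hI_sub : I ⊆ Iic (I.max' hI) := fun i hi => mem_Iic.2 (I.le_max' i hi)
  calc θ * #I ≤ θ * #(Iic (I.max' hI)) := by gcongr
    _ = θ * (((I.max' hI : Fin n) : ℕ) + 1) := by rw [Fin.card_Iic]; push_cast; ring
    _ ≤ c j := hm.2.le.trans (hc hm.1)

theorem PrefixStable.comp {g : ∀ {n : ℕ}, (Fin n → Y) → Fin n → Z}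
    {f : ∀ {n : ℕ}, (Fin n → X) → Fin n → Y} {K : Set X} {K₁ : Set Y}
    (hg : PrefixStable g K₁) (hf : PrefixStable f K)
    (hfK : ∀ (n : ℕ) (x : Fin n → X), (∀ i, x i ∈ K) → ∀ j, f x j ∈ K₁) :
    PrefixStable (fun x => g (f x)) K := by
  classical
  intro ε hε
  obtain ⟨θ₂, hθ₂, η₂, hη₂, hg⟩ := hg ε hε
  obtain ⟨θ₁, hθ₁, η₁, hη₁, hf⟩ := hf η₂ hη₂
  set θ := θ₁ * θ₂ / (1 + θ₁ + θ₂)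
  have hθθ₁ : θ ≤ θ₁ := by
    rw [div_le_iff₀ (by positivity)]; nlinarith [mul_pos hθ₁ hθ₂]
  have hθθ₂ : θ * (1 + θ₁) ≤ θ₁ * θ₂ := by
    rw [div_mul_eq_mul_div, div_le_iff₀ (by positivity)]; nlinarith [mul_pos hθ₁ hθ₂]
  refine ⟨θ, by positivity, η₁, hη₁, fun n x x' B j hx hx' hxx' hj hB => ?_⟩
  set c : Fin n → ℝ := fun i => #(Iic i ∩ B)
  have hc : Monotone c := fun i i' h => by
    simp only [c]; gcongr
  -- positions where `B` is too dense in the prefix join the exceptional set of the next stage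
  set B₁ := B ∪ ({i | θ₁ * (i.val + 1 : ℝ) < c i} : Finset (Fin n))
  refine hg n (f x) (f x') B₁ j (hfK n x hx) (hfK n x' hx') (fun i hi => ?_) ?_ ?_
  · simp only [B₁, mem_union, mem_filter, mem_univ, true_and, not_or, not_lt] at hi
    exact hf n x x' B i hx hx' hxx' hi.1 hi.2
  · simp only [B₁, mem_union, mem_filter, mem_univ, true_and, not_or, not_lt]
    exact ⟨hj, hB.trans (by gcongr)⟩
  · have hmax := mul_card_filter_lt_le_of_monotone hc hθ₁ j (by positivity)
    have hsplit : (#(Iic j ∩ B₁) : ℝ) ≤ c j + #{i ∈ Iic j | θ₁ * (i.val + 1 : ℝ) < c i} := by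
      rw [inter_union_distrib_left, inter_filter, inter_univ]
      exact (Nat.cast_le.2 (card_union_le _ _)).trans_eq (Nat.cast_add _ _)
    refine le_of_mul_le_mul_left ?_ hθ₁
    calc θ₁ * #(Iic j ∩ B₁) ≤ θ₁ * c j + θ₁ * #{i ∈ Iic j | θ₁ * (i.val + 1 : ℝ) < c i} := by
          rw [← mul_add]; gcongr
      _ ≤ (1 + θ₁) * (θ * ((j : ℕ) + 1)) := by nlinarith
      _ ≤ θ₁ * (θ₂ * ((j : ℕ) + 1)) := by nlinarith

end PrefixStable

theorem dist_inv_card_smul_sum_le {ι E : Type*} [DecidableEq ι] [SeminormedAddCommGroup E]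
    [NormedSpace ℝ E] {t B : Finset ι} (ht : t.Nonempty) {f g : ι → E} {s D : ℝ} (hs : 0 ≤ s)
    (hgood : ∀ i ∈ t, i ∉ B → ‖f i - g i‖ ≤ s) (hbad : ∀ i ∈ t, ‖f i - g i‖ ≤ D)
    (hB : (#(t ∩ B) : ℝ) ≤ s * #t) :
    dist ((#t : ℝ)⁻¹ • ∑ i ∈ t, f i) ((#t : ℝ)⁻¹ • ∑ i ∈ t, g i) ≤ s * (1 + D) := by
  have hsum : ‖∑ i ∈ t, (f i - g i)‖ ≤ #(t ∩ B) * D + #t * s := by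
    rw [← sum_inter_add_sum_sdiff t B]
    refine (norm_add_le _ _).trans (add_le_add ?_ ?_)
    · refine (norm_sum_le _ _).trans ?_
      simpa using sum_le_card_nsmul _ _ D fun i hi => hbad i (mem_inter.1 hi).1
    · refine (norm_sum_le _ _).trans ((sum_le_card_nsmul _ _ s fun i hi => ?_).trans ?_)
      · exact hgood i (mem_sdiff.1 hi).1 (mem_sdiff.1 hi).2
      · rw [nsmul_eq_mul]; gcongr; exact sdiff_subset
  have hpos : (0 : ℝ) < #t := by exact_mod_cast ht.card_pos
  rw [dist_eq_norm, ← smul_sub, ← sum_sub_distrib, norm_smul, norm_inv, Real.norm_natCast,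
    inv_mul_le_iff₀ hpos]
  have hD : 0 ≤ D := (norm_nonneg _).trans (hbad _ ht.choose_spec)
  nlinarith

theorem Convex.inv_card_smul_sum_mem_s5 {ι E : Type*} [AddCommGroup E] [Module ℝ E] {Q : Set E}
    (hQ : Convex ℝ Q) {t : Finset ι} (ht : t.Nonempty) {f : ι → E} (hf : ∀ i ∈ t, f i ∈ Q) :
    (#t : ℝ)⁻¹ • ∑ i ∈ t, f i ∈ Q := by
  rw [smul_sum]
  refine hQ.sum_mem (fun _ _ => by positivity) ?_ hf
  rw [sum_const, nsmul_eq_mul, mul_inv_cancel₀ (by exact_mod_cast ht.card_pos.ne')]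

namespace AttentionLayer

variable {d : ℕ} (L : AttentionLayer d)

/-- The attention vector is the quotient of the two components of the prefix average of this. -/
def weighted (z : (Fin d → ℝ) × (Fin d → ℝ) × (Fin d → ℝ)) : ℝ × (Fin d → ℝ) :=
  (L.w z.1 z.2.1 z.2.2, L.w z.1 z.2.1 z.2.2 • L.val z.1)

noncomputable def readout (q : (ℝ × (Fin d → ℝ)) × (Fin d → ℝ)) : Fin d → ℝ :=
  L.F (q.1.1⁻¹ • q.1.2) q.2

theorem continuous_weighted : Continuous L.weighted :=
  L.w_cont.prodMk (L.w_cont.smul (L.val_cont.comp continuous_fst))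

theorem continuousOn_readout : ContinuousOn L.readout {q | q.1.1 ≠ 0} :=
  L.F_cont.comp_continuousOn <|
    ((continuous_fst.comp continuous_fst).continuousOn.inv₀ fun _ h => h).smul
      (continuous_snd.comp continuous_fst).continuousOn |>.prodMk continuous_snd.continuousOn

theorem apply_eq_readout {n : ℕ} (x : Fin n → (Fin d → ℝ)) (j : Fin n) :
    L.apply x j =
      L.readout ((#(Iic j) : ℝ)⁻¹ • ∑ i ∈ Iic j, L.weighted (x i, x j, L.p i j), x j) := by
  have hN : (#(Iic j) : ℝ) ≠ 0 := by exact_mod_cast (nonempty_Iic (a := j)).card_pos.ne'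
  simp only [apply, attn, readout, weighted, Prod.smul_fst, Prod.smul_snd, Prod.fst_sum,
    Prod.snd_sum, smul_eq_mul, mul_inv, inv_inv, smul_smul]
  rw [mul_right_comm, mul_inv_cancel₀ hN, one_mul]

theorem exists_weighted_mem {Z : Set ((Fin d → ℝ) × (Fin d → ℝ) × (Fin d → ℝ))}
    (hZ : IsCompact Z) :
    ∃ Q : Set (ℝ × (Fin d → ℝ)), IsCompact Q ∧ Convex ℝ Q ∧ (∀ q ∈ Q, 0 < q.1) ∧
      ∀ z ∈ Z, L.weighted z ∈ Q := by
  obtain ⟨c, hc, hcw⟩ := hZ.exists_forall_le' (L.continuous_weighted.fst.continuousOn)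
    (a := 0) fun z _ => L.w_pos _ _ _
  obtain ⟨R, hR⟩ := (hZ.image L.continuous_weighted).isBounded.exists_norm_le
  have hRz : ∀ z ∈ Z, ‖L.weighted z‖ ≤ R := fun z hz => hR _ ⟨z, hz, rfl⟩
  refine ⟨Set.Icc c R ×ˢ Metric.closedBall 0 R, isCompact_Icc.prod (isCompact_closedBall _ _),
    (convex_Icc _ _).prod (convex_closedBall _ _), fun q hq => hc.trans_le hq.1.1,
    fun z hz => ⟨⟨hcw z hz, ?_⟩, ?_⟩⟩
  · exact (le_abs_self _).trans ((norm_fst_le _).trans (hRz z hz))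
  · exact mem_closedBall_zero_iff.2 ((norm_snd_le _).trans (hRz z hz))

theorem exists_isCompact_apply_mem (hL : L.CompactPE) {K : Set (Fin d → ℝ)} (hK : IsCompact K) :
    ∃ K₁, IsCompact K₁ ∧
      ∀ (n : ℕ) (x : Fin n → (Fin d → ℝ)), (∀ i, x i ∈ K) → ∀ j, L.apply x j ∈ K₁ := by
  obtain ⟨Kp, hKp, hp⟩ := hL
  obtain ⟨Q, hQ, hQconv, hQpos, hQmem⟩ := L.exists_weighted_mem (hK.prod (hK.prod hKp))
  refine ⟨L.readout '' (Q ×ˢ K), (hQ.prod hK).image_of_continuousOn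
    (L.continuousOn_readout.mono fun q hq => (hQpos _ hq.1).ne'), fun n x hx j => ?_⟩
  rw [apply_eq_readout]
  exact Set.mem_image_of_mem _ ⟨hQconv.inv_card_smul_sum_mem_s5 nonempty_Iic
    fun i _ => hQmem _ ⟨hx i, hx j, hp i j⟩, hx j⟩

theorem prefixStable (hL : L.CompactPE) {K : Set (Fin d → ℝ)} (hK : IsCompact K) :
    PrefixStable L.apply K := by
  obtain ⟨Kp, hKp, hp⟩ := hL
  set Z := K ×ˢ K ×ˢ Kp
  have hZ : IsCompact Z := hK.prod (hK.prod hKp)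
  obtain ⟨Q, hQ, hQconv, hQpos, hQmem⟩ := L.exists_weighted_mem hZ
  intro ε hε
  obtain ⟨δ, hδ, hreadout⟩ := Metric.uniformContinuousOn_iff.1
    ((hQ.prod hK).uniformContinuousOn_of_continuous
      (L.continuousOn_readout.mono fun q hq => (hQpos _ hq.1).ne')) ε hε
  set D := Metric.diam (L.weighted '' Z)
  have hD : 0 ≤ D := Metric.diam_nonneg
  set s := δ / (2 * (1 + D))
  have hs : 0 < s := by positivity
  obtain ⟨η, hη, hweighted⟩ := Metric.uniformContinuousOn_iff.1
    (hZ.uniformContinuousOn_of_continuous L.continuous_weighted.continuousOn) s hs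
  refine ⟨s, hs, min η δ / 2, by positivity, fun n x x' B j hx hx' hxx' hj hB => ?_⟩
  have hxj : dist (x j) (x' j) < min η δ := (hxx' j hj).trans_lt (half_lt_self (by positivity))
  set z := fun i => (x i, x j, L.p i j)
  set z' := fun i => (x' i, x' j, L.p i j)
  have hz : ∀ i, z i ∈ Z := fun i => ⟨hx i, hx j, hp i j⟩
  have hz' : ∀ i, z' i ∈ Z := fun i => ⟨hx' i, hx' j, hp i j⟩
  have hgood : ∀ i ∈ Iic j, i ∉ B → ‖L.weighted (z i) - L.weighted (z' i)‖ ≤ s := by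
    intro i _ hi
    rw [← dist_eq_norm]
    refine (hweighted _ (hz i) _ (hz' i) ?_).le
    simp only [z, z', Prod.dist_eq, dist_self]
    have hxi : dist (x i) (x' i) < η :=
      (hxx' i hi).trans_lt ((half_lt_self (by positivity)).trans_le (min_le_left _ _))
    exact max_lt hxi (max_lt (hxj.trans_le (min_le_left _ _)) hη)
  have hbad : ∀ i ∈ Iic j, ‖L.weighted (z i) - L.weighted (z' i)‖ ≤ D := fun i _ => by
    rw [← dist_eq_norm]
    exact Metric.dist_le_diam_of_mem (hZ.image L.continuous_weighted).isBounded
      ⟨_, hz i, rfl⟩ ⟨_, hz' i, rfl⟩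
  have havg := dist_inv_card_smul_sum_le nonempty_Iic hs.le hgood hbad
    (by rwa [Fin.card_Iic, Nat.cast_add_one])
  show dist (L.apply x j) (L.apply x' j) ≤ ε
  rw [apply_eq_readout, apply_eq_readout]
  refine (hreadout _ ⟨hQconv.inv_card_smul_sum_mem_s5 nonempty_Iic fun i _ => hQmem _ (hz i), hx j⟩
    _ ⟨hQconv.inv_card_smul_sum_mem_s5 nonempty_Iic fun i _ => hQmem _ (hz' i), hx' j⟩ ?_).le
  rw [Prod.dist_eq, max_lt_iff]
  refine ⟨havg.trans_lt ?_, hxj.trans_le (min_le_right _ _)⟩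
  calc s * (1 + D) = δ / 2 := by simp only [s]; field_simp
    _ < δ := half_lt_self hδ

end AttentionLayer

theorem applyLayers_prefixStable {d : ℕ} (Ls : List (AttentionLayer d))
    (hLs : ∀ L ∈ Ls, L.CompactPE) {K : Set (Fin d → ℝ)} (hK : IsCompact K) :
    ∃ K', IsCompact K' ∧
      (∀ (n : ℕ) (x : Fin n → (Fin d → ℝ)), (∀ i, x i ∈ K) → ∀ j, applyLayers Ls x j ∈ K') ∧
      PrefixStable (applyLayers Ls) K := by
  induction Ls generalizing K with
  | nil => exact ⟨K, hK, fun _ _ hx => hx, prefixStable_id K⟩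
  | cons L Ls ih =>
    obtain ⟨K₁, hK₁, hLK₁⟩ := L.exists_isCompact_apply_mem (hLs L List.mem_cons_self) hK
    obtain ⟨K', hK', hK'mem, hstable⟩ :=
      ih (fun L' hL' => hLs L' (List.mem_cons_of_mem _ hL')) hK₁
    exact ⟨K', hK', fun n x hx => hK'mem n _ (hLK₁ n x hx),
      hstable.comp (L.prefixStable (hLs L List.mem_cons_self) hK) hLK₁⟩

theorem Transformer.exists_eval_close {A : Type*} [Fintype A] {d : ℕ} (T : Transformer A d)
    (hT : T.IsCompactT) {ε : ℝ} (hε : 0 < ε) :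
    ∃ θ > 0, ∀ (n : ℕ) (γ γ' : Fin (n + 1) → A) (B : Finset (Fin (n + 1))),
      (∀ i ∉ B, γ i = γ' i) → Fin.last n ∉ B → (#B : ℝ) ≤ θ * (n + 1) →
      ∀ a, |T.eval γ a - T.eval γ' a| ≤ ε := by
  obtain ⟨⟨K, hK, hembed⟩, hlayers⟩ := hT
  obtain ⟨K', hK', hK'mem, hstable⟩ := applyLayers_prefixStable T.layers hlayers hK
  obtain ⟨δ, hδ, hproj⟩ := Metric.uniformContinuousOn_iff.1
    (hK'.uniformContinuousOn_of_continuous T.proj_cont.continuousOn) ε hε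
  obtain ⟨θ, hθ, η, hη, hclose⟩ := hstable (δ / 2) (half_pos hδ)
  refine ⟨θ, hθ, fun n γ γ' B hB hlast hcard a => ?_⟩
  set x := fun j : Fin (n + 1) => T.embed (γ j) j
  set x' := fun j : Fin (n + 1) => T.embed (γ' j) j
  have hx : ∀ i, x i ∈ K := fun i => hembed _ _
  have hx' : ∀ i, x' i ∈ K := fun i => hembed _ _
  have hout := hclose (n + 1) x x' B (Fin.last n) hx hx'
    (fun i hi => by simp [x, x', hB i hi, hη.le]) hlast
    (by rwa [inter_eq_right.2 fun i _ => mem_Iic.2 (Fin.le_last i)])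
  rw [← Real.dist_eq]
  exact (dist_le_pi_dist _ _ a).trans
    (hproj _ (hK'mem _ x hx _) _ (hK'mem _ x' hx' _) (hout.trans_lt (half_lt_self hδ))).le

namespace Nat

variable {p : ℕ → Prop} [DecidablePred p]

theorem exists_not_of_count_lt {g : ℕ} (h : count p g < g) :
    ∃ u < g, g ≤ u + count p g + 1 ∧ ¬ p u := by
  by_contra! H
  have hsub : Ico (g - (count p g + 1)) g ⊆ {i ∈ range g | p i} := fun i hi => by
    rw [mem_Ico] at hi
    exact mem_filter.2 ⟨mem_range.2 hi.2, H i hi.2 (by omega)⟩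
  have := card_le_card hsub
  rw [card_Ico, ← count_eq_card_filter_range] at this
  omega

theorem exists_run_start_after (hp : {i | p i}.Infinite) {u : ℕ} (hu : ¬ p u) :
    ∃ k, u < k ∧ p k ∧ ¬ p (k - 1) ∧ count p k = count p u := by
  have hex : ∃ k, u < k ∧ p k := by
    obtain ⟨k, hk, huk⟩ := hp.exists_gt u
    exact ⟨k, huk, hk⟩
  obtain ⟨huk, hpk⟩ := Nat.find_spec hex
  have hgap : ∀ i, u ≤ i → i < Nat.find hex → ¬ p i := fun i hui hik hpi => by
    rcases hui.eq_or_lt with rfl | hui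
    · exact hu hpi
    · exact Nat.find_min hex hik ⟨hui, hpi⟩
  refine ⟨Nat.find hex, huk, hpk, hgap _ (by omega) (by omega), ?_⟩
  have hconst : ∀ i, u ≤ i → i ≤ Nat.find hex → count p i = count p u := by
    intro i hui
    induction i, hui using Nat.le_induction with
    | base => exact fun _ => rfl
    | succ i hui ih =>
      intro hik
      rw [count_succ, if_neg (hgap i hui hik), add_zero, ih (by omega)]
  exact hconst _ huk.le le_rfl

theorem exists_run_start_count_le (hp : {i | p i}.Infinite) {ρ : ℝ} (hρ : ρ ≤ 1 / 2)
    (hfreq : ∃ᶠ g in atTop, (count p g : ℝ) < ρ * g) (N : ℕ) :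
    ∃ k ≥ N, p k ∧ ¬ p (k - 1) ∧ (count p k : ℝ) ≤ 2 * ρ * k := by
  obtain ⟨g, hg, hcount⟩ := frequently_atTop.1 hfreq (2 * N)
  have hcount₀ : (0 : ℝ) ≤ count p g := Nat.cast_nonneg _
  have hρ : 0 < ρ := pos_of_mul_pos_left (hcount₀.trans_lt hcount) (Nat.cast_nonneg _)
  have hlt : count p g < g := by
    have : (count p g : ℝ) < g := by nlinarith
    exact_mod_cast this
  obtain ⟨u, hug, hgu, hu⟩ := exists_not_of_count_lt hlt
  obtain ⟨k, huk, hpk, hpk1, hk⟩ := exists_run_start_after hp hu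
  have hgk : (g : ℝ) ≤ 2 * k := by
    have : (g : ℝ) ≤ k + count p g := by exact_mod_cast (show g ≤ k + count p g by omega)
    nlinarith
  have hNk : N ≤ k := by
    have : g ≤ 2 * k := by exact_mod_cast hgk
    omega
  have hcount_k : (count p k : ℝ) ≤ count p g := by
    rw [hk]; exact_mod_cast count_monotone p hug.le
  refine ⟨k, hNk, hpk, hpk1, ?_⟩
  calc (count p k : ℝ) ≤ ρ * g := hcount_k.trans hcount.le
    _ ≤ 2 * ρ * k := by nlinarith

end Nat

theorem Nat.card_filter_fin_eq_count (p : ℕ → Prop) [DecidablePred p] (k : ℕ) :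
    #{i : Fin k | p i} = Nat.count p k := by
  rw [Nat.count_eq_card_filter_range, ← card_map Fin.valEmbedding]
  congr 1
  ext m
  simp only [Finset.mem_map, mem_filter, mem_univ, true_and, mem_range, Fin.valEmbedding_apply]
  exact ⟨fun ⟨i, hi, hm⟩ => hm ▸ ⟨i.2, hi⟩, fun h => ⟨⟨m, h.1⟩, h.2, rfl⟩⟩

open Classical in
theorem frequently_count_lt_of_relHammingInf_lt {A : Type*} {α β : ℕ → A} {ρ : ℝ}
    (h : relHammingInf α β < ρ) :
    ∃ᶠ k in atTop, (Nat.count (fun i => α (i + 1) ≠ β (i + 1)) k : ℝ) < ρ * k := by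
  have heq : ∀ k, relHamming (fun i : Fin k => α (i + 1)) (fun i : Fin k => β (i + 1)) =
      Nat.count (fun i => α (i + 1) ≠ β (i + 1)) k / k := fun k => by
    rw [relHamming, Nat.card_filter_fin_eq_count (fun i => α (i + 1) ≠ β (i + 1))]
  have hle : ∀ k, relHamming (fun i : Fin k => α (i + 1)) (fun i : Fin k => β (i + 1)) ≤ 1 :=
    fun k => by
      rw [heq]; exact div_le_one_of_le₀ (by exact_mod_cast Nat.count_le _) (Nat.cast_nonneg _)
  refine ((frequently_lt_of_liminf_lt (isCoboundedUnder_ge_of_le atTop hle) h).and_eventually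
    (eventually_gt_atTop 0)).mono fun k ⟨hk, hk0⟩ => ?_
  rwa [heq, div_lt_iff₀ (by exact_mod_cast hk0)] at hk

/-- **Isolation theorem.** If a compact decoder-only Transformer eventually learns `α`,
then there is `δ > 0` such that no sequence `β` differing from `α` in infinitely many
positions with `d_H(α, β) ≤ δ` is eventually learned by `T`. -/
theorem isolation {A : Type*} [Fintype A] {d : ℕ} (T : Transformer A d)
    (hT : T.IsCompactT) (α : ℕ → A) (hα : EventuallyLearns T α) :
    ∃ δ : ℝ, 0 < δ ∧ ∀ β : ℕ → A, {n : ℕ | α n ≠ β n}.Infinite →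
      relHammingInf α β ≤ δ → ¬ EventuallyLearns T β := by
  classical
  obtain ⟨ε, hε, n₀, hα⟩ := hα
  obtain ⟨θ, hθ, hclose⟩ := T.exists_eval_close hT (half_pos hε)
  refine ⟨min θ 1 / 4, by positivity, fun β hinf hdist ⟨ε', hε', n₁, hβ⟩ => ?_⟩
  set p : ℕ → Prop := fun i => α (i + 1) ≠ β (i + 1)
  have hp : {i | p i}.Infinite :=
    Set.Infinite.preimage' (f := (· + 1)) (s := {n | α n ≠ β n}) <|
      (hinf.sdiff (Set.finite_singleton 0)).mono fun m hm =>
        ⟨hm.1, m - 1, Nat.sub_add_cancel (Nat.pos_of_ne_zero hm.2)⟩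
  obtain ⟨k, hk, hpk, hpk1, hcount⟩ := Nat.exists_run_start_count_le hp (ρ := min θ 1 / 2)
    (by linarith [min_le_right θ 1])
    (frequently_count_lt_of_relHammingInf_lt (hdist.trans_lt (by linarith [lt_min hθ one_pos])))
    (n₀ + n₁ + 1)
  obtain ⟨n, rfl⟩ : ∃ n, k = n + 1 := ⟨k - 1, by omega⟩
  have hBcard : (#{i : Fin (n + 1) | p i} : ℝ) ≤ θ * (n + 1) := by
    rw [Nat.card_filter_fin_eq_count p]
    push_cast at hcount
    nlinarith [min_le_left θ 1]
  have heval := hclose n (fun i => α (i + 1)) (fun i => β (i + 1)) {i | p i}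
    (fun i hi => by simpa [p] using hi) (by simpa [p] using hpk1) hBcard
  have hα' := hα n (by omega) (β (n + 2)) (Ne.symm hpk)
  have hβ' := hβ n (by omega) (α (n + 2)) hpk
  have h₁ := abs_le.1 (heval (α (n + 2)))
  have h₂ := abs_le.1 (heval (β (n + 2)))
  linarith [h₁.1, h₁.2, h₂.1, h₂.2]
end
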